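/- arXiv:1904.00429 — 4 statements merged into one kernel-verified Lean document; each statement's English description precedes it below -/
import Mathlib

section
/- Let A be a random m×n real matrix and B a random n×d real matrix such that all entries of A and B are mutually independent random variables, with finite nonzero moments E[‖A_{:,j}‖_2^2] and E[‖B_{j,:}‖_2^2] for each j, and E[‖AB‖_F^2] < ∞. Let s be a positive integer and let Ẑ_s be the sketched product using sampling distribution ξ^u_j = 1/n. Then E_{A,B}[ E_{ξ^u}[ ‖AB − Ẑ_s‖_F^2 ] ] = (n·ν̄ + μ̄)/s, i.e. it exceeds the minimal expected squared Frobenius error μ̄/s (attained at ξ*) by exactly n·ν̄/s, where, writing w̄_j = E[‖A_{:,j}‖_2^2]·E[‖B_{j,:}‖_2^2], μ̄ = (Σ_{j=1}^n √(w̄_j))^2 − E[‖AB‖_F^2] and ν̄ = Σ_{i=1}^n ( √(w̄_i) − (1/n) Σ_{j=1}^n √(w̄_j) )^2. -/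
open MeasureTheory ProbabilityTheory


section detaux
open Finset
variable {s n : ℕ}



lemma marg1 (hs : 0 < s) (t : Fin s) (g : Fin n → ℝ) :
    ∑ ρ : Fin s → Fin n, g (ρ t) = (n : ℝ) ^ (s - 1) * ∑ j, g j := by
  classical
  have h1 : ∀ ρ : Fin s → Fin n, g (ρ t) = ∏ u, (if u = t then g (ρ u) else 1) := by
    intro ρ
    rw [Finset.prod_ite_eq' univ t (fun u => g (ρ u))]
    simp
  calc ∑ ρ : Fin s → Fin n, g (ρ t)
      = ∑ ρ : Fin s → Fin n, ∏ u, (if u = t then g else fun _ => (1:ℝ)) (ρ u) := by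
        refine Finset.sum_congr rfl fun ρ _ => ?_
        rw [h1 ρ]
        refine Finset.prod_congr rfl fun u _ => ?_
        by_cases h : u = t <;> simp [h]
    _ = ∏ u, ∑ j, (if u = t then g else fun _ => (1:ℝ)) j := (Fintype.prod_sum _).symm
    _ = (n : ℝ) ^ (s - 1) * ∑ j, g j := by
        rw [← Finset.mul_prod_erase univ _ (mem_univ t)]
        simp only [if_pos rfl]
        rw [Finset.prod_congr rfl (fun u hu => by
          rw [if_neg (Finset.mem_erase.1 hu).1]), Finset.prod_const]
        simp [Finset.card_erase_of_mem, mul_comm]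

lemma marg2 (t t' : Fin s) (htt' : t ≠ t') (g h : Fin n → ℝ) :
    ∑ ρ : Fin s → Fin n, g (ρ t) * h (ρ t') =
      (n : ℝ) ^ (s - 2) * ((∑ j, g j) * ∑ j, h j) := by
  classical
  set w : Fin s → Fin n → ℝ := fun u => if u = t then g else if u = t' then h else fun _ => 1
    with hw
  have hprodsplit : ∀ f : Fin s → ℝ,
      ∏ u, f u = f t * (f t' * ∏ u ∈ (univ.erase t).erase t', f u) := by
    intro f
    rw [← Finset.mul_prod_erase univ f (mem_univ t),
      ← Finset.mul_prod_erase (univ.erase t) f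
        (Finset.mem_erase.2 ⟨Ne.symm htt', mem_univ t'⟩)]
  have hcard : ((univ.erase t).erase t').card = s - 2 := by
    rw [Finset.card_erase_of_mem (Finset.mem_erase.2 ⟨Ne.symm htt', mem_univ t'⟩),
      Finset.card_erase_of_mem (mem_univ t)]
    simp only [Finset.card_univ, Fintype.card_fin]
    omega
  have hrest : ∀ u, u ∈ (univ.erase t).erase t' → ∀ (x : Fin n), w u x = 1 := by
    intro u hu x
    have h1 := (Finset.mem_erase.1 hu).1
    have h2 := (Finset.mem_erase.1 (Finset.mem_erase.1 hu).2).1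
    simp [hw, h2, h1]
  calc ∑ ρ : Fin s → Fin n, g (ρ t) * h (ρ t')
      = ∑ ρ : Fin s → Fin n, ∏ u, w u (ρ u) := by
        refine Finset.sum_congr rfl fun ρ _ => ?_
        rw [hprodsplit (fun u => w u (ρ u))]
        rw [Finset.prod_congr rfl (fun u hu => hrest u hu (ρ u)), Finset.prod_const_one]
        simp [hw, if_neg (Ne.symm htt')]
    _ = ∏ u, ∑ j, w u j := (Fintype.prod_sum _).symm
    _ = (n : ℝ) ^ (s - 2) * ((∑ j, g j) * ∑ j, h j) := by
        rw [hprodsplit (fun u => ∑ j, w u j)]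
        have hmid : ∀ u ∈ (univ.erase t).erase t', (∑ j, w u j) = (n : ℝ) := by
          intro u hu
          rw [Finset.sum_congr rfl (fun j _ => hrest u hu j), Finset.sum_const]
          simp [Finset.card_univ]
        rw [Finset.prod_congr rfl hmid, Finset.prod_const, hcard]
        have e1 : w t = g := by simp [hw]
        have e2 : w t' = h := by simp [hw, Ne.symm htt']
        rw [e1, e2]
        ring

lemma key_id (hn : 0 < n) (hs : 0 < s) (x : Fin n → ℝ) :
    ∑ ρ : Fin s → Fin n, ((∑ j, x j) - ((n : ℝ) / s) * ∑ t, x (ρ t)) ^ 2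
      = (n : ℝ) ^ s * (((n : ℝ) / s) * ∑ j, (x j) ^ 2 - (∑ j, x j) ^ 2 / s) := by
  classical
  set S : ℝ := ∑ j, x j with hS
  set Q : ℝ := ∑ j, (x j) ^ 2 with hQ
  set c : ℝ := (n : ℝ) / s with hc
  have h1 : ∑ ρ : Fin s → Fin n, (∑ t, x (ρ t)) = (s : ℝ) * ((n : ℝ) ^ (s - 1) * S) := by
    rw [Finset.sum_comm]
    rw [Finset.sum_congr rfl (fun t _ => marg1 hs t x)]
    rw [Finset.sum_const]
    simp [Finset.card_univ, hS]
  have h2 : ∑ ρ : Fin s → Fin n, (∑ t, x (ρ t)) ^ 2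
      = (s : ℝ) * ((n : ℝ) ^ (s - 1) * Q)
        + (s : ℝ) * (((s : ℝ) - 1) * ((n : ℝ) ^ (s - 2) * S ^ 2)) := by
    have hp : ∀ ρ : Fin s → Fin n, (∑ t, x (ρ t)) ^ 2
        = ∑ t, ∑ t', x (ρ t) * x (ρ t') := by
      intro ρ; rw [sq, Finset.sum_mul_sum]
    rw [Finset.sum_congr rfl (fun ρ _ => hp ρ), Finset.sum_comm]
    have hinner : ∀ t : Fin s, ∑ ρ : Fin s → Fin n, ∑ t', x (ρ t) * x (ρ t')
        = (n : ℝ) ^ (s - 1) * Q + ((s : ℝ) - 1) * ((n : ℝ) ^ (s - 2) * S ^ 2) := by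
      intro t
      rw [Finset.sum_comm]
      rw [← Finset.add_sum_erase univ _ (Finset.mem_univ t)]
      have hdiag : ∑ ρ : Fin s → Fin n, x (ρ t) * x (ρ t) = (n : ℝ) ^ (s - 1) * Q := by
        rw [Finset.sum_congr rfl (fun ρ _ => (sq (x (ρ t))).symm)]
        exact marg1 hs t (fun j => (x j) ^ 2)
      have hoff : ∀ t' ∈ univ.erase t, ∑ ρ : Fin s → Fin n, x (ρ t) * x (ρ t')
          = (n : ℝ) ^ (s - 2) * S ^ 2 := by
        intro t' ht'
        rw [marg2 t t' (Ne.symm (Finset.mem_erase.1 ht').1) x x]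
        rw [sq]
      rw [hdiag, Finset.sum_congr rfl hoff, Finset.sum_const]
      rw [Finset.card_erase_of_mem (Finset.mem_univ t)]
      simp only [Finset.card_univ, Fintype.card_fin, nsmul_eq_mul]
      have : ((s - 1 : ℕ) : ℝ) = (s : ℝ) - 1 := by
        have : 1 ≤ s := hs
        push_cast [Nat.cast_sub this]
        ring
      rw [this]
    rw [Finset.sum_congr rfl (fun t _ => hinner t), Finset.sum_const]
    simp only [Finset.card_univ, Fintype.card_fin, nsmul_eq_mul]
    ring
  have hexp : ∀ T : ℝ, (S - c * T) ^ 2 = S ^ 2 - (2 * c * S) * T + c ^ 2 * T ^ 2 :=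
    fun T => by ring
  rw [Finset.sum_congr rfl (fun ρ _ => hexp (∑ t, x (ρ t)))]
  rw [Finset.sum_add_distrib, Finset.sum_sub_distrib, Finset.sum_const,
    ← Finset.mul_sum, ← Finset.mul_sum, h1, h2]
  simp only [Finset.card_univ, Fintype.card_fun, Fintype.card_fin, nsmul_eq_mul]
  have hs0 : (s : ℝ) ≠ 0 := (Nat.cast_pos.2 hs).ne'
  have hn0 : (n : ℝ) ≠ 0 := (Nat.cast_pos.2 hn).ne'
  by_cases hs1 : s = 1
  · subst hs1
    simp only [hc]
    norm_num
    ring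
  · have hs2 : 2 ≤ s := by omega
    have e1 : (n : ℝ) ^ s = (n : ℝ) ^ 2 * (n : ℝ) ^ (s - 2) := by
      rw [← pow_add]; congr 1; omega
    have e2 : (n : ℝ) ^ (s - 1) = (n : ℝ) * (n : ℝ) ^ (s - 2) := by
      rw [← pow_succ']; congr 1; omega
    rw [e1, e2, hc]
    field_simp
    push_cast
    rw [e1]
    ring

lemma key_mat {m d : ℕ} (hn : 0 < n) (hs : 0 < s)
    (a : Fin m → Fin n → ℝ) (b : Fin n → Fin d → ℝ) :
    ∑ ρ : Fin s → Fin n, (∑ i, ∑ k,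
        ((∑ j, a i j * b j k) - ((n : ℝ) / s) * ∑ t, a i (ρ t) * b (ρ t) k) ^ 2)
      = (n : ℝ) ^ s * (((n : ℝ) / s) * (∑ j, (∑ i, (a i j) ^ 2) * (∑ k, (b j k) ^ 2))
          - (∑ i, ∑ k, (∑ j, a i j * b j k) ^ 2) / s) := by
  classical
  rw [Finset.sum_comm]
  have hik : ∀ i : Fin m, ∀ k : Fin d,
      ∑ ρ : Fin s → Fin n, ((∑ j, a i j * b j k) - ((n : ℝ) / s) * ∑ t, a i (ρ t) * b (ρ t) k) ^ 2
        = (n : ℝ) ^ s * (((n : ℝ) / s) * ∑ j, (a i j * b j k) ^ 2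
            - (∑ j, a i j * b j k) ^ 2 / s) :=
    fun i k => key_id hn hs (fun j => a i j * b j k)
  calc ∑ i, ∑ ρ : Fin s → Fin n, (∑ k,
        ((∑ j, a i j * b j k) - ((n : ℝ) / s) * ∑ t, a i (ρ t) * b (ρ t) k) ^ 2)
      = ∑ i, ∑ k, ∑ ρ : Fin s → Fin n,
        ((∑ j, a i j * b j k) - ((n : ℝ) / s) * ∑ t, a i (ρ t) * b (ρ t) k) ^ 2 := by
        refine Finset.sum_congr rfl fun i _ => Finset.sum_comm
    _ = ∑ i, ∑ k, (n : ℝ) ^ s * (((n : ℝ) / s) * ∑ j, (a i j * b j k) ^ 2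
            - (∑ j, a i j * b j k) ^ 2 / s) := by
        exact Finset.sum_congr rfl fun i _ => Finset.sum_congr rfl fun k _ => hik i k
    _ = (n : ℝ) ^ s * (((n : ℝ) / s) * (∑ j, (∑ i, (a i j) ^ 2) * (∑ k, (b j k) ^ 2))
          - (∑ i, ∑ k, (∑ j, a i j * b j k) ^ 2) / s) := by
        have hre : ∑ i, ∑ k, ∑ j, (a i j * b j k) ^ 2
            = ∑ j, (∑ i, (a i j) ^ 2) * (∑ k, (b j k) ^ 2) := by
          calc ∑ i, ∑ k, ∑ j, (a i j * b j k) ^ 2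
              = ∑ i, ∑ j, ∑ k, (a i j) ^ 2 * (b j k) ^ 2 := by
                refine Finset.sum_congr rfl fun i _ => ?_
                rw [Finset.sum_comm]
                exact Finset.sum_congr rfl fun j _ => Finset.sum_congr rfl fun k _ => by
                  rw [mul_pow]
            _ = ∑ j, ∑ i, ∑ k, (a i j) ^ 2 * (b j k) ^ 2 := Finset.sum_comm
            _ = ∑ j, (∑ i, (a i j) ^ 2) * (∑ k, (b j k) ^ 2) := by
                refine Finset.sum_congr rfl fun j _ => ?_
                rw [Finset.sum_mul_sum]
        rw [← hre]
        simp only [mul_sub, Finset.mul_sum, Finset.sum_sub_distrib, Finset.sum_div]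





-- measurability of the error functional on the product space
lemma measFerr {m n d s : ℕ} (c : ℝ) (ρ : Fin s → Fin n) :
    Measurable (fun q : (Fin m → Fin n → ℝ) × (Fin n → Fin d → ℝ) =>
      ∑ i, ∑ k, ((∑ j, q.1 i j * q.2 j k) - c * ∑ t, q.1 i (ρ t) * q.2 (ρ t) k) ^ 2) := by
  have ha : ∀ (i : Fin m) (j : Fin n),
      Measurable fun q : (Fin m → Fin n → ℝ) × (Fin n → Fin d → ℝ) => q.1 i j :=
    fun i j => (measurable_pi_apply j).comp ((measurable_pi_apply i).comp measurable_fst)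
  have hb : ∀ (j : Fin n) (k : Fin d),
      Measurable fun q : (Fin m → Fin n → ℝ) × (Fin n → Fin d → ℝ) => q.2 j k :=
    fun j k => (measurable_pi_apply k).comp ((measurable_pi_apply j).comp measurable_snd)
  refine Finset.measurable_sum _ fun i _ => Finset.measurable_sum _ fun k _ => ?_
  refine Measurable.pow_const ?_ 2
  exact (Finset.measurable_sum _ fun j _ => (ha i j).mul (hb j k)).sub
    ((Finset.measurable_sum _ fun t _ => (ha i (ρ t)).mul (hb (ρ t) k)).const_mul c)

-- singleton of a tuple of Fin's is measurable in the pi σ-algebra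
lemma measSingleton {s n : ℕ} (ρ : Fin s → Fin n) :
    MeasurableSet {v : Fin s → Fin n | v = ρ} := by
  have : {v : Fin s → Fin n | v = ρ} = ⋂ t, (fun v : Fin s → Fin n => v t) ⁻¹' {ρ t} := by
    ext v; simp [funext_iff]
  rw [this]
  exact MeasurableSet.iInter fun t => (measurable_pi_apply t) (measurableSet_singleton (ρ t))




end detaux

/-- Uniform sampling for randomized matrix multiplication: the
expected squared Frobenius error of the uniformly sketched product
`Ẑ_s = (n/s) ∑ₜ A_{:,rₜ} B_{rₜ,:}` equals `(n ν̄ + μ̄)/s`, i.e. it exceeds the minimal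
expected squared Frobenius error `μ̄/s` (attained at `ξ*`) by exactly `n ν̄ / s`,
where `w̄ j = E[‖A_{:,j}‖₂²]·E[‖B_{j,:}‖₂²]`,
`μ̄ = (∑ⱼ √(w̄ j))² − E[‖AB‖_F²]` and
`ν̄ = ∑ᵢ (√(w̄ i) − (1/n) ∑ⱼ √(w̄ j))²`. -/
theorem uniform_sampling_error_matrix_product
    {Ω : Type*} [MeasureSpace Ω] [IsProbabilityMeasure (ℙ : Measure Ω)]
    (m n d s : ℕ) (hn : 0 < n) (hs : 0 < s)
    (A : Ω → Fin m → Fin n → ℝ) (B : Ω → Fin n → Fin d → ℝ)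
    (hA : ∀ i j, Measurable fun ω => A ω i j) (hB : ∀ j k, Measurable fun ω => B ω j k)
    (hAB_indep : iIndepFun
      (Sum.elim (fun (p : Fin m × Fin n) ω => A ω p.1 p.2)
        (fun (p : Fin n × Fin d) ω => B ω p.1 p.2)) ℙ)
    (wA wB : Fin n → ℝ)
    (hwA : ∀ j, wA j = ∫ ω, ∑ i, (A ω i j) ^ 2 ∂ℙ)
    (hwB : ∀ j, wB j = ∫ ω, ∑ k, (B ω j k) ^ 2 ∂ℙ)
    (hwA_int : ∀ j, Integrable (fun ω => ∑ i, (A ω i j) ^ 2) ℙ)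
    (hwB_int : ∀ j, Integrable (fun ω => ∑ k, (B ω j k) ^ 2) ℙ)
    (hwA_pos : ∀ j, 0 < wA j) (hwB_pos : ∀ j, 0 < wB j)
    (hABF_int : Integrable (fun ω => ∑ i, ∑ k, (∑ j, A ω i j * B ω j k) ^ 2) ℙ)
    -- s i.i.d. indices, each uniform on {1,…,n}, independent of (A, B)
    (r : Ω → Fin s → Fin n) (hr : ∀ t, Measurable fun ω => r ω t)
    (hr_iid : iIndepFun
      (fun (t : Fin s) ω => r ω t) ℙ)
    (hr_unif : ∀ t j, ℙ {ω | r ω t = j} = (n : ENNReal)⁻¹)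
    (hr_AB : IndepFun (fun ω => (A ω, B ω)) r ℙ)
    (μbar νbar : ℝ)
    (hμbar : μbar = (∑ j, Real.sqrt (wA j * wB j)) ^ 2 -
      ∫ ω, ∑ i, ∑ k, (∑ j, A ω i j * B ω j k) ^ 2 ∂ℙ)
    (hνbar : νbar = ∑ i, (Real.sqrt (wA i * wB i) -
      (1 / (n : ℝ)) * ∑ j, Real.sqrt (wA j * wB j)) ^ 2) :
    ∫ ω, ∑ i, ∑ k, ((∑ j, A ω i j * B ω j k) -
        (n : ℝ) / (s : ℝ) * ∑ t, A ω i (r ω t) * B ω (r ω t) k) ^ 2 ∂ℙ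
      = ((n : ℝ) * νbar + μbar) / s := by
  classical
  have hn0 : (n : ℝ) ≠ 0 := (Nat.cast_pos.2 hn).ne'
  have hs0 : (s : ℝ) ≠ 0 := (Nat.cast_pos.2 hs).ne'
  set c : ℝ := (n : ℝ) / s with hc
  set I : ℝ := ∫ ω, ∑ i, ∑ k, (∑ j, A ω i j * B ω j k) ^ 2 ∂ℙ with hI
  -- the error functional, for a fixed sampling tuple ρ
  set F : (Fin m → Fin n → ℝ) → (Fin n → Fin d → ℝ) → (Fin s → Fin n) → ℝ :=
    fun a b ρ => ∑ i, ∑ k, ((∑ j, a i j * b j k) - c * ∑ t, a i (ρ t) * b (ρ t) k) ^ 2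
    with hF
  -- Step 0 : independence of A and B
  have hIndAB : IndepFun (fun ω => A ω) (fun ω => B ω) ℙ := by
    set f := Sum.elim (fun p : Fin m × Fin n => fun ω => A ω p.1 p.2)
      (fun p : Fin n × Fin d => fun ω => B ω p.1 p.2) with hf
    have hfmeas : ∀ p, Measurable (f p) := by
      rintro (⟨i, j⟩ | ⟨j, k⟩)
      · exact hA i j
      · exact hB j k
    set fS : Finset ((Fin m × Fin n) ⊕ (Fin n × Fin d)) :=
      Finset.univ.image Sum.inl with hfS
    set fT : Finset ((Fin m × Fin n) ⊕ (Fin n × Fin d)) :=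
      Finset.univ.image Sum.inr with hfT
    have hdisj : Disjoint fS fT := by
      rw [Finset.disjoint_left]
      rintro x hx hy
      simp only [hfS, hfT, Finset.mem_image, Finset.mem_univ, true_and] at hx hy
      obtain ⟨p, hp⟩ := hx; obtain ⟨q, hq⟩ := hy
      rw [← hp] at hq; exact Sum.inl_ne_inr hq.symm
    have hbase := hAB_indep.indepFun_finset fS fT hdisj hfmeas
    have hΦA : Measurable fun v : fS → ℝ => fun (i : Fin m) (j : Fin n) =>
        v ⟨Sum.inl (i, j), by simp [hfS]⟩ :=
      measurable_pi_lambda _ fun i => measurable_pi_lambda _ fun j => measurable_pi_apply _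
    have hΦB : Measurable fun v : fT → ℝ => fun (j : Fin n) (k : Fin d) =>
        v ⟨Sum.inr (j, k), by simp [hfT]⟩ :=
      measurable_pi_lambda _ fun j => measurable_pi_lambda _ fun k => measurable_pi_apply _
    exact hbase.comp hΦA hΦB
  -- integrability of individual squared entries
  have hA2 : ∀ i j, Integrable (fun ω => (A ω i j) ^ 2) ℙ := by
    intro i j
    refine (hwA_int j).mono' ((hA i j).pow_const 2).aestronglyMeasurable ?_
    filter_upwards with ω
    rw [Real.norm_eq_abs, abs_of_nonneg (sq_nonneg _)]
    exact Finset.single_le_sum (fun i' _ => sq_nonneg (A ω i' j)) (Finset.mem_univ i)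
  have hB2 : ∀ j k, Integrable (fun ω => (B ω j k) ^ 2) ℙ := by
    intro j k
    refine (hwB_int j).mono' ((hB j k).pow_const 2).aestronglyMeasurable ?_
    filter_upwards with ω
    rw [Real.norm_eq_abs, abs_of_nonneg (sq_nonneg _)]
    exact Finset.single_le_sum (fun k' _ => sq_nonneg (B ω j k')) (Finset.mem_univ k)
  have hSmeas : ∀ i k, Measurable fun ω => ∑ j, A ω i j * B ω j k := fun i k =>
    Finset.measurable_sum _ fun j _ => (hA i j).mul (hB j k)
  have hS2int : ∀ i k, Integrable (fun ω => (∑ j, A ω i j * B ω j k) ^ 2) ℙ := by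
    intro i k
    refine hABF_int.mono' ((hSmeas i k).pow_const 2).aestronglyMeasurable ?_
    filter_upwards with ω
    rw [Real.norm_eq_abs, abs_of_nonneg (sq_nonneg _)]
    calc (∑ j, A ω i j * B ω j k) ^ 2
        ≤ ∑ k', (∑ j, A ω i j * B ω j k') ^ 2 :=
          Finset.single_le_sum (f := fun k' => (∑ j, A ω i j * B ω j k') ^ 2)
            (fun k' _ => sq_nonneg _) (Finset.mem_univ k)
      _ ≤ ∑ i', ∑ k', (∑ j, A ω i' j * B ω j k') ^ 2 :=
          Finset.single_le_sum (f := fun i' => ∑ k', (∑ j, A ω i' j * B ω j k') ^ 2)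
            (fun i' _ => Finset.sum_nonneg fun k' _ => sq_nonneg _) (Finset.mem_univ i)
  have hS2 : ∀ i k, MemLp (fun ω => ∑ j, A ω i j * B ω j k) 2 ℙ := fun i k =>
    (memLp_two_iff_integrable_sq (hSmeas i k).aestronglyMeasurable).2 (hS2int i k)
  -- entries of A are independent of entries of B, giving L² of products
  have hX2 : ∀ (i : Fin m) (j : Fin n) (k : Fin d),
      MemLp (fun ω => A ω i j * B ω j k) 2 ℙ := by
    intro i j k
    have hind : IndepFun (fun ω => (A ω i j) ^ 2) (fun ω => (B ω j k) ^ 2) ℙ :=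
      hIndAB.comp (φ := fun a : Fin m → Fin n → ℝ => (a i j) ^ 2)
        (ψ := fun b : Fin n → Fin d → ℝ => (b j k) ^ 2)
        (((measurable_pi_apply j).comp (measurable_pi_apply i)).pow_const 2)
        (((measurable_pi_apply k).comp (measurable_pi_apply j)).pow_const 2)
    have hint : Integrable (fun ω => (A ω i j * B ω j k) ^ 2) ℙ := by
      have := hind.integrable_mul (hA2 i j) (hB2 j k)
      refine this.congr ?_  -- (A²)*(B²) = (A*B)²
      filter_upwards with ω
      simp [mul_pow]
    exact (memLp_two_iff_integrable_sq
      (((hA i j).mul (hB j k)).aestronglyMeasurable)).2 hint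
  -- integrability of F(A, B, ρ) for each fixed ρ
  have hFint : ∀ ρ : Fin s → Fin n, Integrable (fun ω => F (A ω) (B ω) ρ) ℙ := by
    intro ρ
    refine integrable_finset_sum _ fun i _ => integrable_finset_sum _ fun k _ => ?_
    have hmem : MemLp (fun ω => (∑ j, A ω i j * B ω j k)
        - c * ∑ t, A ω i (ρ t) * B ω (ρ t) k) 2 ℙ := by
      have h1 := hS2 i k
      have h2 : MemLp (fun ω => ∑ t, A ω i (ρ t) * B ω (ρ t) k) 2 ℙ :=
        memLp_finset_sum _ fun t _ => hX2 i (ρ t) k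
      exact h1.sub (h2.const_mul c)
    exact hmem.integrable_sq
  -- distribution of the whole tuple r
  have hEvt : ∀ ρ : Fin s → Fin n, MeasurableSet {ω | r ω = ρ} := by
    intro ρ
    have : {ω | r ω = ρ} = (fun ω => r ω) ⁻¹' {v | v = ρ} := rfl
    rw [this]
    exact (measurable_pi_lambda _ hr) (measSingleton ρ)
  have hPr : ∀ ρ : Fin s → Fin n, ℙ {ω | r ω = ρ} = ((n : ENNReal)⁻¹) ^ s := by
    intro ρ
    have hset : {ω | r ω = ρ} = ⋂ t ∈ Finset.univ, (fun ω => r ω t) ⁻¹' {ρ t} := by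
      ext ω; simp [funext_iff]
    rw [hset, hr_iid.measure_inter_preimage_eq_mul Finset.univ
      (sets := fun t => {ρ t}) (fun t _ => measurableSet_singleton (ρ t))]
    have : ∀ t : Fin s, ℙ ((fun ω => r ω t) ⁻¹' {ρ t}) = (n : ENNReal)⁻¹ := by
      intro t
      have : (fun ω => r ω t) ⁻¹' {ρ t} = {ω | r ω t = ρ t} := rfl
      rw [this, hr_unif t (ρ t)]
    rw [Finset.prod_congr rfl (fun t _ => this t), Finset.prod_const]
    simp [Finset.card_univ]
  -- indicators of the events r = ρ
  have hind_int : ∀ ρ : Fin s → Fin n,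
      Integrable (fun ω => if r ω = ρ then (1 : ℝ) else 0) ℙ := by
    intro ρ
    have := (integrable_const (1 : ℝ) (μ := (ℙ : Measure Ω))).indicator (hEvt ρ)
    refine this.congr ?_
    filter_upwards with ω
    simp [Set.indicator_apply, Set.mem_setOf_eq]
  have hind_val : ∀ ρ : Fin s → Fin n,
      ∫ ω, (if r ω = ρ then (1 : ℝ) else 0) ∂ℙ = ((n : ℝ) ^ s)⁻¹ := by
    intro ρ
    have heq : (fun ω => if r ω = ρ then (1 : ℝ) else 0)
        = Set.indicator {ω | r ω = ρ} (1 : Ω → ℝ) := by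
      funext ω
      simp [Set.indicator_apply, Set.mem_setOf_eq]
    rw [heq, integral_indicator_one (hEvt ρ), measureReal_def, hPr ρ]
    simp [ENNReal.toReal_pow, ENNReal.toReal_inv, inv_pow]
  -- independence of F(A,B,ρ) and the indicator of r = ρ
  have hindep : ∀ ρ : Fin s → Fin n, IndepFun (fun ω => F (A ω) (B ω) ρ)
      (fun ω => if r ω = ρ then (1 : ℝ) else 0) ℙ := by
    intro ρ
    have hg : Measurable (fun v : Fin s → Fin n => if v = ρ then (1 : ℝ) else 0) :=
      Measurable.ite (measSingleton ρ) measurable_const measurable_const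
    exact hr_AB.comp (measFerr c ρ) hg
  -- independence of the column/row norms of A and B
  have hIndj : ∀ j : Fin n, IndepFun (fun ω => ∑ i, (A ω i j) ^ 2)
      (fun ω => ∑ k, (B ω j k) ^ 2) ℙ := by
    intro j
    exact hIndAB.comp
      (φ := fun a : Fin m → Fin n → ℝ => ∑ i, (a i j) ^ 2)
      (ψ := fun b : Fin n → Fin d → ℝ => ∑ k, (b j k) ^ 2)
      (Finset.measurable_sum _ fun i _ =>
        ((measurable_pi_apply j).comp (measurable_pi_apply i)).pow_const 2)
      (Finset.measurable_sum _ fun k _ =>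
        ((measurable_pi_apply k).comp (measurable_pi_apply j)).pow_const 2)
  have hGint : ∀ j : Fin n,
      Integrable (fun ω => (∑ i, (A ω i j) ^ 2) * (∑ k, (B ω j k) ^ 2)) ℙ :=
    fun j => (hIndj j).integrable_mul (hwA_int j) (hwB_int j)
  -- main computation
  have hmain : (fun ω => F (A ω) (B ω) (r ω))
      = fun ω => ∑ ρ : Fin s → Fin n,
          F (A ω) (B ω) ρ * (if r ω = ρ then (1 : ℝ) else 0) := by
    funext ω
    rw [Finset.sum_congr rfl (fun ρ _ => by
      rw [mul_ite, mul_one, mul_zero] :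
        ∀ ρ ∈ Finset.univ, F (A ω) (B ω) ρ * (if r ω = ρ then (1 : ℝ) else 0)
          = if r ω = ρ then F (A ω) (B ω) ρ else 0)]
    rw [Finset.sum_ite_eq Finset.univ (r ω) (fun ρ => F (A ω) (B ω) ρ)]
    simp
  have hW : ∫ ω, F (A ω) (B ω) (r ω) ∂ℙ
      = c * (∑ j, wA j * wB j) - I / s := by
    calc ∫ ω, F (A ω) (B ω) (r ω) ∂ℙ
        = ∑ ρ : Fin s → Fin n,
            ∫ ω, F (A ω) (B ω) ρ * (if r ω = ρ then (1 : ℝ) else 0) ∂ℙ := by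
          rw [hmain]
          exact integral_finset_sum _ fun ρ _ =>
            (hindep ρ).integrable_mul (hFint ρ) (hind_int ρ)
      _ = ∑ ρ : Fin s → Fin n,
            (∫ ω, F (A ω) (B ω) ρ ∂ℙ) * ((n : ℝ) ^ s)⁻¹ := by
          refine Finset.sum_congr rfl fun ρ _ => ?_
          have h := (hindep ρ).integral_mul_eq_mul_integral (hFint ρ).aestronglyMeasurable (hind_int ρ).aestronglyMeasurable
          rw [hind_val ρ] at h
          exact h
      _ = ((n : ℝ) ^ s)⁻¹ * ∫ ω, ∑ ρ : Fin s → Fin n, F (A ω) (B ω) ρ ∂ℙ := by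
          rw [← Finset.sum_mul, mul_comm, integral_finset_sum _ fun ρ _ => hFint ρ]
      _ = ((n : ℝ) ^ s)⁻¹ * ∫ ω, (n : ℝ) ^ s *
            (c * (∑ j, (∑ i, (A ω i j) ^ 2) * (∑ k, (B ω j k) ^ 2))
              - (∑ i, ∑ k, (∑ j, A ω i j * B ω j k) ^ 2) / s) ∂ℙ := by
          congr 1
          refine integral_congr_ae (Filter.Eventually.of_forall fun ω => ?_)
          exact key_mat hn hs (A ω) (B ω)
      _ = ((n : ℝ) ^ s)⁻¹ * ((n : ℝ) ^ s *
            (c * (∑ j, wA j * wB j) - I / s)) := by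
          congr 1
          rw [integral_const_mul]
          congr 1
          rw [integral_sub ((integrable_finset_sum _ fun j _ => hGint j).const_mul c)
            (hABF_int.div_const (s : ℝ))]
          rw [integral_const_mul, integral_finset_sum _ fun j _ => hGint j]
          have hjval : ∀ j ∈ Finset.univ,
              ∫ ω, (∑ i, (A ω i j) ^ 2) * (∑ k, (B ω j k) ^ 2) ∂ℙ = wA j * wB j := by
            intro j _
            have h := (hIndj j).integral_mul_eq_mul_integral (hwA_int j).aestronglyMeasurable (hwB_int j).aestronglyMeasurable
            rw [← hwA j, ← hwB j] at h
            exact h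
          rw [Finset.sum_congr rfl hjval]
          rw [integral_div]
      _ = c * (∑ j, wA j * wB j) - I / s := by
          rw [← mul_assoc, inv_mul_cancel₀ (pow_ne_zero s hn0), one_mul]
  -- conclusion: algebra
  have hgoal : (∫ ω, ∑ i, ∑ k, ((∑ j, A ω i j * B ω j k) -
        c * ∑ t, A ω i (r ω t) * B ω (r ω t) k) ^ 2 ∂ℙ)
      = ∫ ω, F (A ω) (B ω) (r ω) ∂ℙ := rfl
  rw [hgoal, hW]
  set T : ℝ := ∑ j, Real.sqrt (wA j * wB j) with hT
  have hsq : ∀ j, Real.sqrt (wA j * wB j) ^ 2 = wA j * wB j :=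
    fun j => Real.sq_sqrt (mul_pos (hwA_pos j) (hwB_pos j)).le
  have hν' : νbar = (∑ j, wA j * wB j) - T ^ 2 / n := by
    rw [hνbar]
    have hterm : ∀ i : Fin n, (Real.sqrt (wA i * wB i) - (1 / (n : ℝ)) * T) ^ 2
        = (wA i * wB i) - (2 / (n : ℝ)) * T * Real.sqrt (wA i * wB i)
          + (T / n) ^ 2 := by
      intro i
      rw [sub_sq, hsq i]
      ring
    rw [Finset.sum_congr rfl fun i _ => hterm i]
    rw [Finset.sum_add_distrib, Finset.sum_sub_distrib, ← Finset.mul_sum, ← hT,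
      Finset.sum_const, Finset.card_univ, Fintype.card_fin, nsmul_eq_mul]
    field_simp
    ring
  rw [hν', hμbar, hc]
  field_simp
  ring
end

section
/- Let A be a random m×n real matrix and B a random n×d real matrix with mutually independent entries, finite nonzero moments E[‖A_{:,j}‖_2^2], E[‖B_{j,:}‖_2^2], and E[‖AB‖_F^2] < ∞; let f : ℝ → ℝ be Lipschitz with constant C_f, and denote by f⊙ the entrywise application of f to a matrix. Let M ≥ 2 and l ≥ 0 be integers and let Ẑ_l be the sketched product of A and B using M^l uniformly sampled indices. Then ‖ E[ f⊙(AB) − f⊙(Ẑ_l) ] ‖_F^2 ≤ C_f^2 M^{−l} (n·ν̄ + μ̄), where, with w̄_j = E[‖A_{:,j}‖_2^2]·E[‖B_{j,:}‖_2^2], μ̄ = (Σ_{j=1}^n √(w̄_j))^2 − E[‖AB‖_F^2] and ν̄ = Σ_{i=1}^n ( √(w̄_i) − (1/n) Σ_{j=1}^n √(w̄_j) )^2. -/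
open MeasureTheory ProbabilityTheory

section AuxLemmas

set_option linter.unusedSectionVars false

variable {Ω : Type*} [MeasureSpace Ω] [IsProbabilityMeasure (ℙ : Measure Ω)]

/-- Jensen / variance: `(E g)^2 ≤ E g^2`. -/
lemma sq_integral_le_integral_sq {g : Ω → ℝ} (hg : MemLp g 2 ℙ) :
    (∫ ω, g ω ∂ℙ) ^ 2 ≤ ∫ ω, g ω ^ 2 ∂ℙ := by
  have h := variance_nonneg g ℙ
  rw [variance_eq_sub hg] at h
  have h2 : ℙ[g ^ 2] = ∫ ω, g ω ^ 2 ∂ℙ := rfl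
  rw [h2] at h
  linarith

/-- product of two L² functions is integrable -/
lemma integrable_mul_of_sq {f g : Ω → ℝ} (hf : AEStronglyMeasurable f ℙ)
    (hg : AEStronglyMeasurable g ℙ)
    (hf2 : Integrable (fun ω => f ω ^ 2) ℙ) (hg2 : Integrable (fun ω => g ω ^ 2) ℙ) :
    Integrable (fun ω => f ω * g ω) ℙ := by
  refine Integrable.mono' ((hf2.add hg2).div_const 2) (hf.mul hg) ?_
  filter_upwards with ω
  simp only [Real.norm_eq_abs, abs_mul, Pi.add_apply]
  nlinarith [sq_nonneg (|f ω| - |g ω|), sq_abs (f ω), sq_abs (g ω),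
    abs_nonneg (f ω), abs_nonneg (g ω)]


/-- bounded (by 1) measurable multiplier preserves integrability -/
lemma integrable_mul_bdd {h g : Ω → ℝ} (hh : Integrable h ℙ) (hg : Measurable g)
    (hb : ∀ ω, |g ω| ≤ 1) : Integrable (fun ω => h ω * g ω) ℙ := by
  refine hh.abs.mono' (hh.aestronglyMeasurable.mul hg.aestronglyMeasurable) ?_
  filter_upwards with ω
  rw [Real.norm_eq_abs, abs_mul]
  calc |h ω| * |g ω| ≤ |h ω| * 1 := by
        have := hb ω; have := abs_nonneg (h ω); nlinarith
  _ = |h ω| := mul_one _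

lemma key_entry {n s : ℕ} (hn : 0 < n) (hs : 0 < s)
    (Y : Fin n → Ω → ℝ) (hYm : ∀ j, Measurable (Y j))
    (hYY : ∀ j j', Integrable (fun ω => Y j ω * Y j' ω) ℙ)
    (r : Ω → Fin s → Fin n) (hr : ∀ t, Measurable fun ω => r ω t)
    (hr_iid : iIndepFun (m := fun _ : Fin s => (inferInstance : MeasurableSpace (Fin n)))
      (fun t ω => r ω t) ℙ)
    (hr_unif : ∀ t j, ℙ {ω | r ω t = j} = (n : ENNReal)⁻¹)
    (hr_Y : IndepFun (fun ω (j : Fin n) => Y j ω) r ℙ) :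
    Measurable (fun ω => ∑ t, Y (r ω t) ω) ∧
    Integrable (fun ω => ∑ t, Y (r ω t) ω) ℙ ∧
    Integrable (fun ω => ((∑ j, Y j ω) - (n:ℝ)/(s:ℝ) * ∑ t, Y (r ω t) ω) ^ 2) ℙ ∧
    ∫ ω, ((∑ j, Y j ω) - (n:ℝ)/(s:ℝ) * ∑ t, Y (r ω t) ω) ^ 2 ∂ℙ
      = (n:ℝ)/(s:ℝ) * ∑ j, ∫ ω, Y j ω ^ 2 ∂ℙ
        - (s:ℝ)⁻¹ * ∫ ω, (∑ j, Y j ω) ^ 2 ∂ℙ := by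
  classical
  have hnR : (0:ℝ) < (n:ℝ) := by exact_mod_cast hn
  have hsRR : (0:ℝ) < (s:ℝ) := by exact_mod_cast hs
  set c : ℝ := (n:ℝ)/(s:ℝ) with hc_def
  set X : Ω → ℝ := fun ω => ∑ j, Y j ω with hX_def
  set χ : Fin s → Fin n → Ω → ℝ := fun t j ω => if r ω t = j then 1 else 0 with hχ_def
  set W : Fin s → Ω → ℝ := fun t ω => ∑ j, Y j ω * χ t j ω with hW_def
  have hχm : ∀ t j, Measurable (χ t j) := fun t j =>
    Measurable.ite ((hr t) (measurableSet_singleton j)) measurable_const measurable_const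
  have hXm : Measurable X := Finset.measurable_sum _ fun j _ => hYm j
  have hWm : ∀ t, Measurable (W t) :=
    fun t => Finset.measurable_sum _ fun j _ => (hYm j).mul (hχm t j)
  have hχb : ∀ t j ω, |χ t j ω| ≤ 1 := by
    intro t j ω; simp only [hχ_def]; split <;> simp
  -- collapse of the sampled value
  have hcollapse : ∀ t ω, Y (r ω t) ω = W t ω := by
    intro t ω
    simp only [hW_def, hχ_def, mul_ite, mul_one, mul_zero]
    rw [Finset.sum_ite_eq]
    simp
  have hrw : (fun ω => (X ω - c * ∑ t, Y (r ω t) ω)) = fun ω => X ω - c * ∑ t, W t ω := by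
    funext ω
    simp only [hcollapse]
  -- integrability pieces
  have hYsq : ∀ j, Integrable (fun ω => Y j ω ^ 2) ℙ := by
    intro j; simpa [sq] using hYY j j
  have hX2_int : Integrable (fun ω => X ω ^ 2) ℙ := by
    have h : (fun ω => X ω ^ 2) = fun ω => ∑ j, ∑ j', Y j ω * Y j' ω := by
      funext ω; rw [sq, hX_def]; rw [Finset.sum_mul_sum]
    rw [h]
    exact integrable_finset_sum _ fun j _ => integrable_finset_sum _ fun j' _ => hYY j j'
  have hXY_int : ∀ j, Integrable (fun ω => X ω * Y j ω) ℙ := by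
    intro j
    have h : (fun ω => X ω * Y j ω) = fun ω => ∑ j', Y j' ω * Y j ω := by
      funext ω; rw [hX_def, Finset.sum_mul]
    rw [h]; exact integrable_finset_sum _ fun j' _ => hYY j' j
  have hXW_int : ∀ t, Integrable (fun ω => X ω * W t ω) ℙ := by
    intro t
    have h : (fun ω => X ω * W t ω) = fun ω => ∑ j, (X ω * Y j ω) * χ t j ω := by
      funext ω; rw [hW_def]; rw [Finset.mul_sum]; exact Finset.sum_congr rfl fun j _ => by ring
    rw [h]
    exact integrable_finset_sum _ fun j _ => integrable_mul_bdd (hXY_int j) (hχm t j) (hχb t j)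
  have hWW_ptwise : ∀ t t' ω, W t ω * W t' ω
      = ∑ j, ∑ j', (Y j ω * Y j' ω) * (χ t j ω * χ t' j' ω) := by
    intro t t' ω
    rw [hW_def]
    rw [Finset.sum_mul_sum]
    exact Finset.sum_congr rfl fun j _ => Finset.sum_congr rfl fun j' _ => by ring
  have hWW_int : ∀ t t', Integrable (fun ω => W t ω * W t' ω) ℙ := by
    intro t t'
    rw [show (fun ω => W t ω * W t' ω)
      = fun ω => ∑ j, ∑ j', (Y j ω * Y j' ω) * (χ t j ω * χ t' j' ω) from
      funext fun ω => hWW_ptwise t t' ω]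
    refine integrable_finset_sum _ fun j _ => integrable_finset_sum _ fun j' _ => ?_
    refine integrable_mul_bdd (hYY j j') ((hχm t j).mul (hχm t' j')) ?_
    intro ω
    rw [abs_mul]
    calc |χ t j ω| * |χ t' j' ω| ≤ 1 * 1 :=
      mul_le_mul (hχb t j ω) (hχb t' j' ω) (abs_nonneg _) zero_le_one
    _ = 1 := one_mul 1
  -- factorization over Y ⊥ r
  have hYvec : Measurable (fun ω (j : Fin n) => Y j ω) := measurable_pi_lambda _ hYm
  have hrm : Measurable r := measurable_pi_lambda _ hr
  have hfactY : ∀ (φ : (Fin n → ℝ) → ℝ), Measurable φ → ∀ ψ : (Fin s → Fin n) → ℝ,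
      ∫ ω, φ (fun j => Y j ω) * ψ (r ω) ∂ℙ =
        (∫ ω, φ (fun j => Y j ω) ∂ℙ) * ∫ ω, ψ (r ω) ∂ℙ := fun φ hφ ψ =>
    (hr_Y.comp hφ (measurable_of_countable ψ)).integral_mul_eq_mul_integral
      (hφ.comp hYvec).aestronglyMeasurable
      ((measurable_of_countable ψ).comp hrm).aestronglyMeasurable
  -- uniform marginal expectations
  have hEχ : ∀ t j, ∫ ω, χ t j ω ∂ℙ = (n:ℝ)⁻¹ := by
    intro t j
    have hS : MeasurableSet {ω | r ω t = j} := (hr t) (measurableSet_singleton j)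
    have h1 : χ t j = Set.indicator {ω | r ω t = j} (fun _ => (1:ℝ)) := by
      funext ω; simp [hχ_def, Set.indicator_apply, Set.mem_setOf_eq]
    rw [h1, integral_indicator_const _ hS, measureReal_def, hr_unif t j]
    simp
  have hEχχ : ∀ t t' j j', t ≠ t' →
      ∫ ω, χ t j ω * χ t' j' ω ∂ℙ = (n:ℝ)⁻¹ * (n:ℝ)⁻¹ := by
    intro t t' j j' hne
    have hind : IndepFun (fun ω => r ω t) (fun ω => r ω t') ℙ := hr_iid.indepFun hne
    have h := (hind.comp (measurable_of_countable (fun e => if e = j then (1:ℝ) else 0))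
      (measurable_of_countable (fun e => if e = j' then (1:ℝ) else 0))).integral_mul_eq_mul_integral
      ((measurable_of_countable _).comp (hr t)).aestronglyMeasurable
      ((measurable_of_countable _).comp (hr t')).aestronglyMeasurable
    have h2 : ∫ ω, χ t j ω * χ t' j' ω ∂ℙ
        = (∫ ω, χ t j ω ∂ℙ) * ∫ ω, χ t' j' ω ∂ℙ := h
    rw [h2, hEχ, hEχ]
  -- expectation values
  have hXW_val : ∀ t, ∫ ω, X ω * W t ω ∂ℙ = (n:ℝ)⁻¹ * ∫ ω, X ω ^ 2 ∂ℙ := by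
    intro t
    have h : (fun ω => X ω * W t ω) = fun ω => ∑ j, (X ω * Y j ω) * χ t j ω := by
      funext ω; rw [hW_def]; rw [Finset.mul_sum]; exact Finset.sum_congr rfl fun j _ => by ring
    rw [h, integral_finset_sum _ fun j _ =>
      integrable_mul_bdd (hXY_int j) (hχm t j) (hχb t j)]
    have hterm : ∀ j : Fin n, ∫ ω, (X ω * Y j ω) * χ t j ω ∂ℙ
        = (∫ ω, X ω * Y j ω ∂ℙ) * (n:ℝ)⁻¹ := by
      intro j
      have := hfactY (fun v => (∑ j', v j') * v j)
        ((Finset.measurable_sum _ fun j' _ => measurable_pi_apply j').mul (measurable_pi_apply j))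
        (fun ρ => if ρ t = j then 1 else 0)
      simp only at this
      rw [show (∫ ω, (X ω * Y j ω) * χ t j ω ∂ℙ)
        = ∫ ω, ((∑ j', Y j' ω) * Y j ω) * (if r ω t = j then (1:ℝ) else 0) ∂ℙ from rfl, this]
      rw [show (∫ ω, (if r ω t = j then (1:ℝ) else 0) ∂ℙ) = (n:ℝ)⁻¹ from hEχ t j]
    rw [Finset.sum_congr rfl fun j _ => hterm j, ← Finset.sum_mul]
    rw [← integral_finset_sum _ fun j _ => hXY_int j]
    have hXX : (fun ω => ∑ j, X ω * Y j ω) = fun ω => X ω ^ 2 :=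
      funext fun ω => by rw [← Finset.mul_sum, sq]
    rw [hXX]
    ring
  have hWW_diag : ∀ t, ∫ ω, W t ω * W t ω ∂ℙ = (n:ℝ)⁻¹ * ∑ j, ∫ ω, Y j ω ^ 2 ∂ℙ := by
    intro t
    have h : (fun ω => W t ω * W t ω) = fun ω => ∑ j, (Y j ω ^ 2) * χ t j ω := by
      funext ω
      rw [← hcollapse t ω]
      simp only [hχ_def, mul_ite, mul_one, mul_zero]
      rw [Finset.sum_ite_eq]
      simp [sq]
    rw [h, integral_finset_sum _ fun j _ =>
      integrable_mul_bdd (hYsq j) (hχm t j) (hχb t j)]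
    have hterm : ∀ j : Fin n, ∫ ω, (Y j ω ^ 2) * χ t j ω ∂ℙ
        = (∫ ω, Y j ω ^ 2 ∂ℙ) * (n:ℝ)⁻¹ := by
      intro j
      have := hfactY (fun v => v j ^ 2) ((measurable_pi_apply j).pow_const 2)
        (fun ρ => if ρ t = j then 1 else 0)
      simp only at this
      rw [show (∫ ω, (Y j ω ^ 2) * χ t j ω ∂ℙ)
        = ∫ ω, (Y j ω ^ 2) * (if r ω t = j then (1:ℝ) else 0) ∂ℙ from rfl, this]
      rw [show (∫ ω, (if r ω t = j then (1:ℝ) else 0) ∂ℙ) = (n:ℝ)⁻¹ from hEχ t j]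
    rw [Finset.sum_congr rfl fun j _ => hterm j, ← Finset.sum_mul]
    ring
  have hWW_off : ∀ t t', t ≠ t' → ∫ ω, W t ω * W t' ω ∂ℙ
      = (n:ℝ)⁻¹ * (n:ℝ)⁻¹ * ∫ ω, X ω ^ 2 ∂ℙ := by
    intro t t' hne
    rw [show (fun ω => W t ω * W t' ω)
      = fun ω => ∑ j, ∑ j', (Y j ω * Y j' ω) * (χ t j ω * χ t' j' ω) from
      funext fun ω => hWW_ptwise t t' ω]
    have hint : ∀ (j j' : Fin n),
        Integrable (fun ω => (Y j ω * Y j' ω) * (χ t j ω * χ t' j' ω)) ℙ := by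
      intro j j'
      refine integrable_mul_bdd (hYY j j') ((hχm t j).mul (hχm t' j')) ?_
      intro ω
      rw [abs_mul]
      calc |χ t j ω| * |χ t' j' ω| ≤ 1 * 1 :=
        mul_le_mul (hχb t j ω) (hχb t' j' ω) (abs_nonneg _) zero_le_one
      _ = 1 := one_mul 1
    rw [integral_finset_sum _ fun j _ => integrable_finset_sum _ fun j' _ => hint j j']
    have hswap : ∀ j : Fin n, ∫ ω, ∑ j', (Y j ω * Y j' ω) * (χ t j ω * χ t' j' ω) ∂ℙ
        = ∑ j', ∫ ω, (Y j ω * Y j' ω) * (χ t j ω * χ t' j' ω) ∂ℙ :=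
      fun j => integral_finset_sum _ fun j' _ => hint j j'
    rw [Finset.sum_congr rfl fun j _ => hswap j]
    have hterm : ∀ j j' : Fin n, ∫ ω, (Y j ω * Y j' ω) * (χ t j ω * χ t' j' ω) ∂ℙ
        = (∫ ω, Y j ω * Y j' ω ∂ℙ) * ((n:ℝ)⁻¹ * (n:ℝ)⁻¹) := by
      intro j j'
      have := hfactY (fun v => v j * v j')
        ((measurable_pi_apply j).mul (measurable_pi_apply j'))
        (fun ρ => (if ρ t = j then (1:ℝ) else 0) * (if ρ t' = j' then (1:ℝ) else 0))
      simp only at this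
      rw [show (∫ ω, (Y j ω * Y j' ω) * (χ t j ω * χ t' j' ω) ∂ℙ)
        = ∫ ω, (Y j ω * Y j' ω) *
          ((if r ω t = j then (1:ℝ) else 0) * (if r ω t' = j' then (1:ℝ) else 0)) ∂ℙ from rfl,
        this]
      rw [show (∫ ω, ((if r ω t = j then (1:ℝ) else 0) * (if r ω t' = j' then (1:ℝ) else 0)) ∂ℙ)
        = (n:ℝ)⁻¹ * (n:ℝ)⁻¹ from hEχχ t t' j j' hne]
    rw [Finset.sum_congr rfl fun j _ => Finset.sum_congr rfl fun j' _ => hterm j j']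
    have hcollect : (∑ j, ∑ j', (∫ ω, Y j ω * Y j' ω ∂ℙ) * ((n:ℝ)⁻¹ * (n:ℝ)⁻¹))
        = (∑ j, ∑ j', ∫ ω, Y j ω * Y j' ω ∂ℙ) * ((n:ℝ)⁻¹ * (n:ℝ)⁻¹) := by
      simp only [← Finset.sum_mul]
    rw [hcollect]
    have hXXval : (∑ j, ∑ j', ∫ ω, Y j ω * Y j' ω ∂ℙ) = ∫ ω, X ω ^ 2 ∂ℙ := by
      have h1 : ∀ j : Fin n, (∑ j', ∫ ω, Y j ω * Y j' ω ∂ℙ)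
          = ∫ ω, ∑ j', Y j ω * Y j' ω ∂ℙ :=
        fun j => (integral_finset_sum _ fun j' _ => hYY j j').symm
      rw [Finset.sum_congr rfl fun j _ => h1 j,
        ← integral_finset_sum _ fun j _ => integrable_finset_sum _ fun j' _ => hYY j j']
      have h2 : (fun ω => ∑ j, ∑ j', Y j ω * Y j' ω) = fun ω => X ω ^ 2 :=
        funext fun ω => by rw [← Finset.sum_mul_sum, sq]
      rw [h2]
    rw [hXXval]
    ring
  -- integrability of Y itself and of the sampled sum
  have hY_int : ∀ j, Integrable (Y j) ℙ := fun j =>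
    ((memLp_two_iff_integrable_sq (hYm j).aestronglyMeasurable).2 (hYsq j)).integrable one_le_two
  have hW_int : ∀ t, Integrable (W t) ℙ := fun t =>
    integrable_finset_sum _ fun j _ => integrable_mul_bdd (hY_int j) (hχm t j) (hχb t j)
  have hsampled_eq : (fun ω => ∑ t, Y (r ω t) ω) = fun ω => ∑ t, W t ω :=
    funext fun ω => Finset.sum_congr rfl fun t _ => hcollapse t ω
  have hsampled_m : Measurable (fun ω => ∑ t, Y (r ω t) ω) := by
    rw [hsampled_eq]; exact Finset.measurable_sum _ fun t _ => hWm t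
  have hsampled_int : Integrable (fun ω => ∑ t, Y (r ω t) ω) ℙ := by
    rw [hsampled_eq]; exact integrable_finset_sum _ fun t _ => hW_int t
  -- expansion of the square
  have hdiff2_eq : (fun ω => ((∑ j, Y j ω) - c * ∑ t, Y (r ω t) ω) ^ 2)
      = fun ω => X ω ^ 2 - 2 * c * (∑ t, X ω * W t ω)
        + c ^ 2 * ∑ t, ∑ t', W t ω * W t' ω := by
    funext ω
    rw [show (∑ t, Y (r ω t) ω) = ∑ t, W t ω from
      Finset.sum_congr rfl fun t _ => hcollapse t ω]
    rw [← Finset.mul_sum, ← Finset.sum_mul_sum]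
    show (X ω - c * ∑ t, W t ω) ^ 2 = _
    ring
  have hInt2 : Integrable (fun ω => X ω ^ 2 - 2 * c * (∑ t, X ω * W t ω)
      + c ^ 2 * ∑ t, ∑ t', W t ω * W t' ω) ℙ := by
    have h1 := (integrable_finset_sum (μ := ℙ) Finset.univ fun t _ => hXW_int t).const_mul (2 * c)
    have h2 := (integrable_finset_sum (μ := ℙ) Finset.univ fun t _ =>
      integrable_finset_sum Finset.univ fun t' _ => hWW_int t t').const_mul (c ^ 2)
    exact (hX2_int.sub h1).add h2
  refine ⟨hsampled_m, hsampled_int, ?_, ?_⟩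
  · rw [hdiff2_eq]; exact hInt2
  · rw [hdiff2_eq]
    have h1 := (integrable_finset_sum (μ := ℙ) Finset.univ fun t _ => hXW_int t).const_mul (2 * c)
    have h2 := (integrable_finset_sum (μ := ℙ) Finset.univ fun t _ =>
      integrable_finset_sum Finset.univ fun t' _ => hWW_int t t').const_mul (c ^ 2)
    have hsub : Integrable (fun ω => X ω ^ 2 - 2 * c * (∑ t, X ω * W t ω)) ℙ :=
      hX2_int.sub h1
    rw [integral_add hsub h2, integral_sub hX2_int h1,
      integral_const_mul, integral_const_mul,
      integral_finset_sum _ fun t _ => hXW_int t,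
      integral_finset_sum _ fun t _ =>
        integrable_finset_sum Finset.univ fun t' _ => hWW_int t t']
    have hsw : ∀ t : Fin s, ∫ ω, ∑ t', W t ω * W t' ω ∂ℙ
        = ∑ t', ∫ ω, W t ω * W t' ω ∂ℙ :=
      fun t => integral_finset_sum _ fun t' _ => hWW_int t t'
    rw [Finset.sum_congr rfl fun t _ => hsw t]
    set T : ℝ := ∫ ω, X ω ^ 2 ∂ℙ with hT_def
    set D : ℝ := (n:ℝ)⁻¹ * ∑ j, ∫ ω, Y j ω ^ 2 ∂ℙ with hD_def
    set O : ℝ := (n:ℝ)⁻¹ * (n:ℝ)⁻¹ * T with hO_def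
    have hWWval : ∀ t t' : Fin s, ∫ ω, W t ω * W t' ω ∂ℙ = if t = t' then D else O := by
      intro t t'
      by_cases h : t = t'
      · subst h; simp only [if_pos rfl]; exact hWW_diag t
      · rw [if_neg h]; exact hWW_off t t' h
    rw [Finset.sum_congr rfl fun t _ => Finset.sum_congr rfl fun t' _ => hWWval t t']
    have hinner : ∀ t : Fin s, (∑ t', if t = t' then D else O) = D + ((s:ℝ) - 1) * O := by
      intro t
      rw [Finset.sum_congr rfl fun t' (_ : t' ∈ Finset.univ) =>
        show (if t = t' then D else O) = O + (if t = t' then D - O else 0) from by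
          split_ifs <;> ring]
      rw [Finset.sum_add_distrib, Finset.sum_const, Finset.sum_ite_eq]
      simp [Finset.card_univ, nsmul_eq_mul]
      ring
    rw [Finset.sum_congr rfl fun t _ => hinner t]
    rw [Finset.sum_congr rfl fun t (_ : t ∈ Finset.univ) => hXW_val t]
    rw [Finset.sum_const, Finset.sum_const]
    simp only [Finset.card_univ, Fintype.card_fin, nsmul_eq_mul]
    rw [hD_def, hO_def, hc_def]
    have hsne : (s:ℝ) ≠ 0 := ne_of_gt hsRR
    have hnne : (n:ℝ) ≠ 0 := ne_of_gt hnR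
    field_simp
    ring

end AuxLemmas

/-- Squared Frobenius norm of the bias of the entrywise Lipschitz
functional of the uniformly sketched matrix product with `M^l` sampled indices:
`‖E[f⊙(AB) − f⊙(Ẑ_l)]‖_F² ≤ C_f² M^(−l) (n ν̄ + μ̄)`. -/
theorem lipschitz_sketch_bias_matrix_product
    {Ω : Type*} [MeasureSpace Ω] [IsProbabilityMeasure (ℙ : Measure Ω)]
    (m n d : ℕ) (hn : 0 < n)
    (A : Ω → Fin m → Fin n → ℝ) (B : Ω → Fin n → Fin d → ℝ)
    (hA : ∀ i j, Measurable fun ω => A ω i j) (hB : ∀ j k, Measurable fun ω => B ω j k)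
    (hAB_indep : iIndepFun
      (m := fun _ : (Fin m × Fin n) ⊕ (Fin n × Fin d) => (inferInstance : MeasurableSpace ℝ))
      (Sum.elim (fun p ω => A ω p.1 p.2) (fun p ω => B ω p.1 p.2)) ℙ)
    (wA wB : Fin n → ℝ)
    (hwA : ∀ j, wA j = ∫ ω, ∑ i, (A ω i j) ^ 2 ∂ℙ)
    (hwB : ∀ j, wB j = ∫ ω, ∑ k, (B ω j k) ^ 2 ∂ℙ)
    (hwA_int : ∀ j, Integrable (fun ω => ∑ i, (A ω i j) ^ 2) ℙ)
    (hwB_int : ∀ j, Integrable (fun ω => ∑ k, (B ω j k) ^ 2) ℙ)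
    (hwA_pos : ∀ j, 0 < wA j) (hwB_pos : ∀ j, 0 < wB j)
    (hABF_int : Integrable (fun ω => ∑ i, ∑ k, (∑ j, A ω i j * B ω j k) ^ 2) ℙ)
    (f : ℝ → ℝ) (Cf : ℝ) (hf : ∀ x y, |f x - f y| ≤ Cf * |x - y|)
    (M l : ℕ) (hM : 2 ≤ M)
    -- M^l i.i.d. indices, each uniform on {1,…,n}, independent of (A, B)
    (r : Ω → Fin (M ^ l) → Fin n) (hr : ∀ t, Measurable fun ω => r ω t)
    (hr_iid : iIndepFun (m := fun _ : Fin (M ^ l) => (inferInstance : MeasurableSpace (Fin n)))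
      (fun t ω => r ω t) ℙ)
    (hr_unif : ∀ t j, ℙ {ω | r ω t = j} = (n : ENNReal)⁻¹)
    (hr_AB : IndepFun (fun ω => (A ω, B ω)) r ℙ)
    (μbar νbar : ℝ)
    (hμbar : μbar = (∑ j, Real.sqrt (wA j * wB j)) ^ 2 -
      ∫ ω, ∑ i, ∑ k, (∑ j, A ω i j * B ω j k) ^ 2 ∂ℙ)
    (hνbar : νbar = ∑ i, (Real.sqrt (wA i * wB i) -
      (1 / (n : ℝ)) * ∑ j, Real.sqrt (wA j * wB j)) ^ 2) :
    ∑ i, ∑ k, ((∫ ω, f (∑ j, A ω i j * B ω j k) ∂ℙ) -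
        ∫ ω, f ((n : ℝ) / (M ^ l : ℝ) * ∑ t, A ω i (r ω t) * B ω (r ω t) k) ∂ℙ) ^ 2 ≤
      Cf ^ 2 * ((M : ℝ) ^ l)⁻¹ * ((n : ℝ) * νbar + μbar) := by
  classical
  have hnR : (0:ℝ) < (n:ℝ) := by exact_mod_cast hn
  have hs : 0 < M ^ l := pow_pos (by omega) l
  have hsR : (0:ℝ) < (M:ℝ) ^ l := by positivity
  have hsR' : ((M ^ l : ℕ) : ℝ) = (M:ℝ) ^ l := by push_cast; ring
  have hCf : 0 ≤ Cf := le_trans (abs_nonneg _) (by simpa using hf 0 1)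
  have hfm : Measurable f := by
    have hlip : LipschitzWith ⟨Cf, hCf⟩ f := by
      apply LipschitzWith.of_dist_le_mul
      intro x y
      rw [Real.dist_eq, Real.dist_eq]; exact hf x y
    exact hlip.continuous.measurable
  -- measurability / integrability of matrix entries
  have hXm : ∀ (i : Fin m) (k : Fin d), Measurable (fun ω => ∑ j, A ω i j * B ω j k) :=
    fun i k => Finset.measurable_sum _ fun j _ => (hA i j).mul (hB j k)
  have hA2 : ∀ (i : Fin m) (j : Fin n), Integrable (fun ω => A ω i j ^ 2) ℙ := by
    intro i j
    refine (hwA_int j).mono' ((hA i j).pow_const 2).aestronglyMeasurable ?_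
    filter_upwards with ω
    rw [Real.norm_eq_abs, abs_of_nonneg (sq_nonneg _)]
    exact Finset.single_le_sum (fun i' _ => sq_nonneg (A ω i' j)) (Finset.mem_univ i)
  have hB2 : ∀ (j : Fin n) (k : Fin d), Integrable (fun ω => B ω j k ^ 2) ℙ := by
    intro j k
    refine (hwB_int j).mono' ((hB j k).pow_const 2).aestronglyMeasurable ?_
    filter_upwards with ω
    rw [Real.norm_eq_abs, abs_of_nonneg (sq_nonneg _)]
    exact Finset.single_le_sum (fun k' _ => sq_nonneg (B ω j k')) (Finset.mem_univ k)
  have hX2 : ∀ (i : Fin m) (k : Fin d),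
      Integrable (fun ω => (∑ j, A ω i j * B ω j k) ^ 2) ℙ := by
    intro i k
    refine hABF_int.mono' ((hXm i k).pow_const 2).aestronglyMeasurable ?_
    filter_upwards with ω
    rw [Real.norm_eq_abs, abs_of_nonneg (sq_nonneg _)]
    calc (∑ j, A ω i j * B ω j k) ^ 2
        ≤ ∑ k', (∑ j, A ω i j * B ω j k') ^ 2 :=
          Finset.single_le_sum (f := fun k' => (∑ j, A ω i j * B ω j k') ^ 2)
            (fun k' _ => sq_nonneg _) (Finset.mem_univ k)
      _ ≤ ∑ i', ∑ k', (∑ j, A ω i' j * B ω j k') ^ 2 :=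
          Finset.single_le_sum (f := fun i' => ∑ k', (∑ j, A ω i' j * B ω j k') ^ 2)
            (fun i' _ => Finset.sum_nonneg fun k' _ => sq_nonneg _) (Finset.mem_univ i)
  have hABind : ∀ (i : Fin m) (j j' : Fin n) (k : Fin d),
      IndepFun (fun ω => A ω i j) (fun ω => B ω j' k) ℙ := by
    intro i j j' k
    have h := hAB_indep.indepFun (i := Sum.inl (i, j)) (j := Sum.inr (j', k)) (by simp)
    simpa using h
  have hY2 : ∀ (i : Fin m) (k : Fin d) (j : Fin n),
      Integrable (fun ω => (A ω i j * B ω j k) ^ 2) ℙ := by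
    intro i k j
    have hind : IndepFun (fun ω => A ω i j ^ 2) (fun ω => B ω j k ^ 2) ℙ :=
      (hABind i j j k).comp (measurable_id.pow_const 2) (measurable_id.pow_const 2)
    have h := hind.integrable_mul (hA2 i j) (hB2 j k)
    have heq : ((fun ω => A ω i j ^ 2) * fun ω => B ω j k ^ 2)
        = fun ω => (A ω i j * B ω j k) ^ 2 := by
      funext ω; simp [Pi.mul_apply, mul_pow]
    rwa [heq] at h
  have hYY : ∀ (i : Fin m) (k : Fin d) (j j' : Fin n),
      Integrable (fun ω => (A ω i j * B ω j k) * (A ω i j' * B ω j' k)) ℙ :=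
    fun i k j j' => integrable_mul_of_sq ((hA i j).mul (hB j k)).aestronglyMeasurable
      ((hA i j').mul (hB j' k)).aestronglyMeasurable (hY2 i k j) (hY2 i k j')
  -- independence of the (i,k) entry vector from r
  have hr_Yik : ∀ (i : Fin m) (k : Fin d),
      IndepFun (fun ω (j : Fin n) => A ω i j * B ω j k) r ℙ := by
    intro i k
    have hφ : Measurable (fun p : (Fin m → Fin n → ℝ) × (Fin n → Fin d → ℝ) =>
        fun j : Fin n => p.1 i j * p.2 j k) :=
      measurable_pi_lambda _ fun j => by
        fun_prop
    exact hr_AB.comp hφ measurable_id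
  -- apply the key per-entry identity
  have hkey := fun (i : Fin m) (k : Fin d) =>
    key_entry hn hs (fun j ω => A ω i j * B ω j k)
      (fun j => (hA i j).mul (hB j k)) (fun j j' => hYY i k j j')
      r hr hr_iid hr_unif (hr_Yik i k)
  -- per-entry Lipschitz/Jensen bound
  have hentry : ∀ (i : Fin m) (k : Fin d),
      ((∫ ω, f (∑ j, A ω i j * B ω j k) ∂ℙ) -
        ∫ ω, f ((n : ℝ) / (M ^ l : ℝ) * ∑ t, A ω i (r ω t) * B ω (r ω t) k) ∂ℙ) ^ 2 ≤
      Cf ^ 2 * ∫ ω, ((∑ j, A ω i j * B ω j k) -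
        (n : ℝ) / (M ^ l : ℝ) * ∑ t, A ω i (r ω t) * B ω (r ω t) k) ^ 2 ∂ℙ := by
    intro i k
    obtain ⟨hZm, hZint, hD2int, -⟩ := hkey i k
    beta_reduce at hZm hZint hD2int
    rw [hsR'] at hD2int
    have hXint : Integrable (fun ω => ∑ j, A ω i j * B ω j k) ℙ :=
      ((memLp_two_iff_integrable_sq (hXm i k).aestronglyMeasurable).2
        (hX2 i k)).integrable one_le_two
    have hfbound : ∀ x : ℝ, |f x| ≤ |f 0| + Cf * |x| := by
      intro x
      have h1 := hf x 0
      simp only [sub_zero] at h1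
      calc |f x| = |f 0 + (f x - f 0)| := by ring_nf
        _ ≤ |f 0| + |f x - f 0| := abs_add_le _ _
        _ ≤ |f 0| + Cf * |x| := by linarith
    have hfX_int : Integrable (fun ω => f (∑ j, A ω i j * B ω j k)) ℙ := by
      refine Integrable.mono' ((integrable_const (|f 0|)).add ((hXint.abs).const_mul Cf))
        (hfm.comp (hXm i k)).aestronglyMeasurable ?_
      filter_upwards with ω
      rw [Real.norm_eq_abs]
      exact hfbound _
    have hZm' : Measurable (fun ω =>
        (n : ℝ) / (M ^ l : ℝ) * ∑ t, A ω i (r ω t) * B ω (r ω t) k) := hZm.const_mul _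
    have hZint' : Integrable (fun ω =>
        (n : ℝ) / (M ^ l : ℝ) * ∑ t, A ω i (r ω t) * B ω (r ω t) k) ℙ :=
      hZint.const_mul _
    have hfZ_int : Integrable (fun ω =>
        f ((n : ℝ) / (M ^ l : ℝ) * ∑ t, A ω i (r ω t) * B ω (r ω t) k)) ℙ := by
      refine Integrable.mono' ((integrable_const (|f 0|)).add ((hZint'.abs).const_mul Cf))
        (hfm.comp hZm').aestronglyMeasurable ?_
      filter_upwards with ω
      rw [Real.norm_eq_abs]
      exact hfbound _
    have hgm : Measurable (fun ω => f (∑ j, A ω i j * B ω j k) -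
        f ((n : ℝ) / (M ^ l : ℝ) * ∑ t, A ω i (r ω t) * B ω (r ω t) k)) :=
      (hfm.comp (hXm i k)).sub (hfm.comp hZm')
    have hg2_int : Integrable (fun ω => (f (∑ j, A ω i j * B ω j k) -
        f ((n : ℝ) / (M ^ l : ℝ) * ∑ t, A ω i (r ω t) * B ω (r ω t) k)) ^ 2) ℙ := by
      refine Integrable.mono' (hD2int.const_mul (Cf ^ 2))
        (hgm.pow_const 2).aestronglyMeasurable ?_
      filter_upwards with ω
      rw [Real.norm_eq_abs, abs_of_nonneg (sq_nonneg _)]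
      have hb := hf (∑ j, A ω i j * B ω j k)
        ((n : ℝ) / (M ^ l : ℝ) * ∑ t, A ω i (r ω t) * B ω (r ω t) k)
      nlinarith [abs_nonneg (f (∑ j, A ω i j * B ω j k) -
          f ((n : ℝ) / (M ^ l : ℝ) * ∑ t, A ω i (r ω t) * B ω (r ω t) k)),
        sq_abs (f (∑ j, A ω i j * B ω j k) -
          f ((n : ℝ) / (M ^ l : ℝ) * ∑ t, A ω i (r ω t) * B ω (r ω t) k)),
        sq_abs ((∑ j, A ω i j * B ω j k) -
          (n : ℝ) / (M ^ l : ℝ) * ∑ t, A ω i (r ω t) * B ω (r ω t) k),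
        abs_nonneg ((∑ j, A ω i j * B ω j k) -
          (n : ℝ) / (M ^ l : ℝ) * ∑ t, A ω i (r ω t) * B ω (r ω t) k)]
    have hgL2 : MemLp (fun ω => f (∑ j, A ω i j * B ω j k) -
        f ((n : ℝ) / (M ^ l : ℝ) * ∑ t, A ω i (r ω t) * B ω (r ω t) k)) 2 ℙ :=
      (memLp_two_iff_integrable_sq hgm.aestronglyMeasurable).2 hg2_int
    calc ((∫ ω, f (∑ j, A ω i j * B ω j k) ∂ℙ) -
          ∫ ω, f ((n : ℝ) / (M ^ l : ℝ) * ∑ t, A ω i (r ω t) * B ω (r ω t) k) ∂ℙ) ^ 2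
        = (∫ ω, (f (∑ j, A ω i j * B ω j k) -
            f ((n : ℝ) / (M ^ l : ℝ) * ∑ t, A ω i (r ω t) * B ω (r ω t) k)) ∂ℙ) ^ 2 := by
          rw [integral_sub hfX_int hfZ_int]
      _ ≤ ∫ ω, (f (∑ j, A ω i j * B ω j k) -
            f ((n : ℝ) / (M ^ l : ℝ) * ∑ t, A ω i (r ω t) * B ω (r ω t) k)) ^ 2 ∂ℙ :=
          sq_integral_le_integral_sq hgL2
      _ ≤ ∫ ω, Cf ^ 2 * ((∑ j, A ω i j * B ω j k) -
            (n : ℝ) / (M ^ l : ℝ) * ∑ t, A ω i (r ω t) * B ω (r ω t) k) ^ 2 ∂ℙ := by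
          refine integral_mono hg2_int (hD2int.const_mul (Cf ^ 2)) ?_
          intro ω
          have hb := hf (∑ j, A ω i j * B ω j k)
            ((n : ℝ) / (M ^ l : ℝ) * ∑ t, A ω i (r ω t) * B ω (r ω t) k)
          simp only
          nlinarith [abs_nonneg (f (∑ j, A ω i j * B ω j k) -
              f ((n : ℝ) / (M ^ l : ℝ) * ∑ t, A ω i (r ω t) * B ω (r ω t) k)),
            sq_abs (f (∑ j, A ω i j * B ω j k) -
              f ((n : ℝ) / (M ^ l : ℝ) * ∑ t, A ω i (r ω t) * B ω (r ω t) k)),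
            sq_abs ((∑ j, A ω i j * B ω j k) -
              (n : ℝ) / (M ^ l : ℝ) * ∑ t, A ω i (r ω t) * B ω (r ω t) k),
            abs_nonneg ((∑ j, A ω i j * B ω j k) -
              (n : ℝ) / (M ^ l : ℝ) * ∑ t, A ω i (r ω t) * B ω (r ω t) k)]
      _ = Cf ^ 2 * ∫ ω, ((∑ j, A ω i j * B ω j k) -
            (n : ℝ) / (M ^ l : ℝ) * ∑ t, A ω i (r ω t) * B ω (r ω t) k) ^ 2 ∂ℙ :=
          integral_const_mul _ _
  -- sum of the second moments of the entries
  have hsumY : ∀ j : Fin n, (∑ i, ∑ k, ∫ ω, (A ω i j * B ω j k) ^ 2 ∂ℙ) = wA j * wB j := by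
    intro j
    have hterm : ∀ (i : Fin m) (k : Fin d), ∫ ω, (A ω i j * B ω j k) ^ 2 ∂ℙ
        = (∫ ω, A ω i j ^ 2 ∂ℙ) * ∫ ω, B ω j k ^ 2 ∂ℙ := by
      intro i k
      have hind : IndepFun (fun ω => A ω i j ^ 2) (fun ω => B ω j k ^ 2) ℙ :=
        (hABind i j j k).comp (measurable_id.pow_const 2) (measurable_id.pow_const 2)
      have h := hind.integral_mul_eq_mul_integral ((hA i j).pow_const 2).aestronglyMeasurable
        ((hB j k).pow_const 2).aestronglyMeasurable
      rw [show (fun ω => (A ω i j * B ω j k) ^ 2) = fun ω => A ω i j ^ 2 * B ω j k ^ 2 from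
        funext fun ω => by rw [mul_pow]]
      exact h
    rw [Finset.sum_congr rfl fun i _ => Finset.sum_congr rfl fun k _ => hterm i k]
    rw [← Finset.sum_mul_sum]
    rw [hwA j, hwB j, integral_finset_sum _ fun i _ => hA2 i j,
      integral_finset_sum _ fun k _ => hB2 j k]
  -- total second moment identity
  have hTtot : (∑ i, ∑ k, ∫ ω, (∑ j, A ω i j * B ω j k) ^ 2 ∂ℙ)
      = ∫ ω, ∑ i, ∑ k, (∑ j, A ω i j * B ω j k) ^ 2 ∂ℙ := by
    rw [integral_finset_sum _ fun i _ => integrable_finset_sum _ fun k _ => hX2 i k]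
    exact Finset.sum_congr rfl fun i _ =>
      (integral_finset_sum _ fun k _ => hX2 i k).symm
  -- sum the key identity over all entries
  have hvalsum : (∑ i, ∑ k, ∫ ω, ((∑ j, A ω i j * B ω j k) -
        (n : ℝ) / (M ^ l : ℝ) * ∑ t, A ω i (r ω t) * B ω (r ω t) k) ^ 2 ∂ℙ)
      = (n : ℝ) / (M:ℝ) ^ l * ∑ j, wA j * wB j
        - ((M:ℝ) ^ l)⁻¹ * ∫ ω, ∑ i, ∑ k, (∑ j, A ω i j * B ω j k) ^ 2 ∂ℙ := by
    have hval : ∀ (i : Fin m) (k : Fin d),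
        ∫ ω, ((∑ j, A ω i j * B ω j k) -
          (n : ℝ) / (M ^ l : ℝ) * ∑ t, A ω i (r ω t) * B ω (r ω t) k) ^ 2 ∂ℙ
        = (n : ℝ) / (M:ℝ) ^ l * ∑ j, ∫ ω, (A ω i j * B ω j k) ^ 2 ∂ℙ
          - ((M:ℝ) ^ l)⁻¹ * ∫ ω, (∑ j, A ω i j * B ω j k) ^ 2 ∂ℙ := by
      intro i k
      obtain ⟨-, -, -, hv⟩ := hkey i k
      beta_reduce at hv
      rw [hsR'] at hv
      exact hv
    rw [Finset.sum_congr rfl fun i _ => Finset.sum_congr rfl fun k _ => hval i k]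
    rw [Finset.sum_congr rfl fun i (_ : i ∈ Finset.univ) => Finset.sum_sub_distrib
      (f := fun k => (n : ℝ) / (M:ℝ) ^ l * ∑ j, ∫ ω, (A ω i j * B ω j k) ^ 2 ∂ℙ)
      (g := fun k => ((M:ℝ) ^ l)⁻¹ * ∫ ω, (∑ j, A ω i j * B ω j k) ^ 2 ∂ℙ)]
    rw [Finset.sum_sub_distrib]
    simp only [← Finset.mul_sum]
    rw [show (∑ i, ∑ k, ∑ j, ∫ ω, (A ω i j * B ω j k) ^ 2 ∂ℙ) = ∑ j, wA j * wB j from by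
      rw [Finset.sum_congr rfl fun i (_ : i ∈ Finset.univ) => Finset.sum_comm
        (s := Finset.univ) (t := Finset.univ)
        (f := fun k j => ∫ ω, (A ω i j * B ω j k) ^ 2 ∂ℙ)]
      rw [Finset.sum_comm]
      exact Finset.sum_congr rfl fun j _ => hsumY j]
    rw [hTtot]
  -- the variance-mean identity for the right-hand side
  have hiden : (n : ℝ) * νbar + μbar = (n:ℝ) * (∑ j, wA j * wB j)
      - ∫ ω, ∑ i, ∑ k, (∑ j, A ω i j * B ω j k) ^ 2 ∂ℙ := by
    rw [hνbar, hμbar]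
    have hsq : ∀ j : Fin n, Real.sqrt (wA j * wB j) ^ 2 = wA j * wB j :=
      fun j => Real.sq_sqrt (mul_nonneg (hwA_pos j).le (hwB_pos j).le)
    have hexp : ∀ j : Fin n, (Real.sqrt (wA j * wB j) -
        (1 / (n : ℝ)) * ∑ j', Real.sqrt (wA j' * wB j')) ^ 2
        = wA j * wB j
          - 2 * ((1 / (n : ℝ)) * ∑ j', Real.sqrt (wA j' * wB j')) * Real.sqrt (wA j * wB j)
          + ((1 / (n : ℝ)) * ∑ j', Real.sqrt (wA j' * wB j')) ^ 2 := by
      intro j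
      rw [sub_sq, hsq j]
      ring
    rw [Finset.sum_congr rfl fun j _ => hexp j]
    rw [Finset.sum_add_distrib, Finset.sum_sub_distrib, ← Finset.mul_sum,
      Finset.sum_const, Finset.card_univ, Fintype.card_fin, nsmul_eq_mul]
    have hnne : (n:ℝ) ≠ 0 := ne_of_gt hnR
    field_simp
    ring
  -- final assembly
  calc ∑ i, ∑ k, ((∫ ω, f (∑ j, A ω i j * B ω j k) ∂ℙ) -
        ∫ ω, f ((n : ℝ) / (M ^ l : ℝ) * ∑ t, A ω i (r ω t) * B ω (r ω t) k) ∂ℙ) ^ 2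
      ≤ ∑ i, ∑ k, Cf ^ 2 * ∫ ω, ((∑ j, A ω i j * B ω j k) -
          (n : ℝ) / (M ^ l : ℝ) * ∑ t, A ω i (r ω t) * B ω (r ω t) k) ^ 2 ∂ℙ :=
        Finset.sum_le_sum fun i _ => Finset.sum_le_sum fun k _ => hentry i k
    _ = Cf ^ 2 * ∑ i, ∑ k, ∫ ω, ((∑ j, A ω i j * B ω j k) -
          (n : ℝ) / (M ^ l : ℝ) * ∑ t, A ω i (r ω t) * B ω (r ω t) k) ^ 2 ∂ℙ := by
        simp only [← Finset.mul_sum]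
    _ = Cf ^ 2 * ((n : ℝ) / (M:ℝ) ^ l * ∑ j, wA j * wB j
          - ((M:ℝ) ^ l)⁻¹ * ∫ ω, ∑ i, ∑ k, (∑ j, A ω i j * B ω j k) ^ 2 ∂ℙ) := by
        rw [hvalsum]
    _ = Cf ^ 2 * ((M : ℝ) ^ l)⁻¹ * ((n : ℝ) * νbar + μbar) := by
        rw [hiden, div_eq_mul_inv]
        ring
end

section
/- Let A be a random m×n real matrix and B a random n×d real matrix with mutually independent entries, finite nonzero moments E[‖A_{:,j}‖_2^2], E[‖B_{j,:}‖_2^2], and E[‖AB‖_F^2] < ∞; let f : ℝ → ℝ be Lipschitz with constant C_f, applied entrywise as f⊙. Let M ≥ 2 and l ≥ 1 be integers, and let Ẑ_l and Ẑ_{l−1} be sketched products of A and B using M^l and M^{l−1} uniformly sampled indices respectively, defined on the same probability space (arbitrary coupling). Then V_‖[ f⊙(Ẑ_l) − f⊙(Ẑ_{l−1}) ] ≤ 2 C_f^2 (M+1)(n·ν̄ + μ̄) M^{−l}, where, with w̄_j = E[‖A_{:,j}‖_2^2]·E[‖B_{j,:}‖_2^2], μ̄ = (Σ_{j=1}^n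 √(w̄_j))^2 − E[‖AB‖_F^2] and ν̄ = Σ_{i=1}^n ( √(w̄_i) − (1/n) Σ_{j=1}^n √(w̄_j) )^2. -/
open MeasureTheory ProbabilityTheory

/-- Per-entry mean-squared-error identity for the uniformly sketched sum. -/
lemma sketch_entry_mse {Ω : Type*} [MeasureSpace Ω] [IsProbabilityMeasure (ℙ : Measure Ω)]
    (n : ℕ) (hn : 0 < n) (s : ℕ) (hs : 0 < s)
    (g : Fin n → Ω → ℝ) (hgm : ∀ j, Measurable (g j))
    (hgg : ∀ j j', Integrable (fun ω => g j ω * g j' ω) ℙ)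
    (r : Ω → Fin s → Fin n) (hr : ∀ t, Measurable fun ω => r ω t)
    (hr_iid : iIndepFun (m := fun _ : Fin s => (inferInstance : MeasurableSpace (Fin n)))
      (fun t ω => r ω t) ℙ)
    (hr_unif : ∀ t j, ℙ {ω | r ω t = j} = (n : ENNReal)⁻¹)
    (hgr : IndepFun (fun ω => (fun j => g j ω)) r ℙ) :
    Integrable (fun ω => ((n : ℝ)/(s : ℝ) * ∑ t, g (r ω t) ω - ∑ j, g j ω)^2) ℙ ∧
    ∫ ω, ((n : ℝ)/(s : ℝ) * ∑ t, g (r ω t) ω - ∑ j, g j ω)^2 ∂ℙ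
      = (n : ℝ)/(s : ℝ) * ∑ j, (∫ ω, (g j ω)^2 ∂ℙ)
        - ((s : ℝ))⁻¹ * ∫ ω, (∑ j, g j ω)^2 ∂ℙ := by
  have hn0 : (n:ℝ) ≠ 0 := Nat.cast_ne_zero.mpr hn.ne'
  have hs0 : (s:ℝ) ≠ 0 := Nat.cast_ne_zero.mpr hs.ne'
  set c : ℝ := (n:ℝ)/(s:ℝ) with hc
  have hc0 : 0 ≤ c := by rw [hc]; positivity
  set I : Fin s → Fin n → Ω → ℝ := fun t j ω => if r ω t = j then (1:ℝ) else 0 with hI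
  have hImeas : ∀ t j, Measurable (I t j) := fun t j =>
    Measurable.ite ((hr t) (measurableSet_singleton j)) measurable_const measurable_const
  have hIbd : ∀ t j ω, ‖I t j ω‖ ≤ 1 := by
    intro t j ω; simp only [hI]; split <;> simp
  have hIint : ∀ t j, Integrable (I t j) ℙ := fun t j =>
    (integrable_const (1:ℝ)).mono' (hImeas t j).aestronglyMeasurable
      (Filter.Eventually.of_forall (hIbd t j))
  have hIval : ∀ t j, ∫ ω, I t j ω ∂ℙ = (n:ℝ)⁻¹ := by
    intro t j
    have h1 : I t j = Set.indicator {ω | r ω t = j} (fun _ => (1:ℝ)) := by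
      funext ω; simp [hI, Set.indicator_apply]
    rw [h1, integral_indicator_const (1:ℝ)
      (show MeasurableSet {ω | r ω t = j} from (hr t) (measurableSet_singleton j)), measureReal_def, hr_unif t j]
    simp
  have hII_int : ∀ (t t' : Fin s) (j j' : Fin n), Integrable (fun ω => I t j ω * I t' j' ω) ℙ :=
    fun t t' j j' =>
      (hIint t' j').bdd_mul (c := 1) (hImeas t j).aestronglyMeasurable (Filter.Eventually.of_forall fun ω => hIbd t j ω)
  have hIIval : ∀ (t t' : Fin s) (j j' : Fin n), t ≠ t' →
      ∫ ω, I t j ω * I t' j' ω ∂ℙ = (n:ℝ)⁻¹ * (n:ℝ)⁻¹ := by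
    intro t t' j j' htt'
    have h1 : IndepFun (fun ω => r ω t) (fun ω => r ω t') ℙ := hr_iid.indepFun htt'
    have hφ : ∀ j₀ : Fin n, Measurable (fun x : Fin n => if x = j₀ then (1:ℝ) else 0) :=
      fun j₀ => measurable_of_countable _
    have hind : IndepFun (I t j) (I t' j') ℙ := h1.comp (hφ j) (hφ j')
    calc ∫ ω, I t j ω * I t' j' ω ∂ℙ
        = (∫ ω, I t j ω ∂ℙ) * ∫ ω, I t' j' ω ∂ℙ :=
          hind.integral_fun_mul_eq_mul_integral (hIint t j).1 (hIint t' j').1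
      _ = (n:ℝ)⁻¹ * (n:ℝ)⁻¹ := by rw [hIval, hIval]
  have hIIval_eq : ∀ (t : Fin s) (j j' : Fin n),
      ∫ ω, I t j ω * I t j' ω ∂ℙ = if j = j' then (n:ℝ)⁻¹ else 0 := by
    intro t j j'
    by_cases hjj : j = j'
    · subst hjj
      have h2 : (fun ω => I t j ω * I t j ω) = I t j := by
        funext ω; simp only [hI]; split <;> simp
      rw [if_pos rfl, h2, hIval]
    · have h2 : (fun ω => I t j ω * I t j' ω) = fun _ => (0:ℝ) := by
        funext ω
        by_cases h1 : r ω t = j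
        · have h3 : ¬ (r ω t = j') := fun hh => hjj (h1.symm.trans hh)
          simp only [hI, if_pos h1, if_neg h3, mul_zero]
        · simp only [hI, if_neg h1, zero_mul]
      rw [if_neg hjj, h2]
      simp
  set N : Fin n → Ω → ℝ := fun j ω => ∑ t, I t j ω with hN
  have hNmeas : ∀ j, Measurable (N j) := fun j => Finset.measurable_sum _ (fun t _ => hImeas t j)
  have hNint : ∀ j, Integrable (N j) ℙ := fun j => integrable_finset_sum _ (fun t _ => hIint t j)
  have hNval : ∀ j, ∫ ω, N j ω ∂ℙ = (s:ℝ) * (n:ℝ)⁻¹ := by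
    intro j
    rw [hN]
    rw [integral_finset_sum _ (fun t _ => hIint t j)]
    simp [hIval]
  have hNnn : ∀ j ω, 0 ≤ N j ω := fun j ω =>
    Finset.sum_nonneg fun t _ => by simp only [hI]; split <;> norm_num
  have hNle : ∀ j ω, N j ω ≤ (s:ℝ) := by
    intro j ω
    calc N j ω ≤ ∑ _t : Fin s, (1:ℝ) :=
          Finset.sum_le_sum fun t _ => by simp only [hI]; split <;> norm_num
      _ = (s:ℝ) := by simp
  set h : Fin n → Ω → ℝ := fun j ω => c * N j ω - 1 with hh
  have hhmeas : ∀ j, Measurable (h j) := fun j =>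
    (measurable_const.mul (hNmeas j)).sub measurable_const
  have hhbd : ∀ j ω, ‖h j ω‖ ≤ (n:ℝ) + 1 := by
    intro j ω
    have h1 : c * N j ω ≤ (n:ℝ) := by
      calc c * N j ω ≤ c * (s:ℝ) := mul_le_mul_of_nonneg_left (hNle j ω) hc0
        _ = (n:ℝ) := by rw [hc]; field_simp
    have h2 : 0 ≤ c * N j ω := mul_nonneg hc0 (hNnn j ω)
    have h3 : h j ω = c * N j ω - 1 := by simp [hh]
    rw [Real.norm_eq_abs, h3, abs_le]
    constructor <;> nlinarith
  have hhh_int : ∀ j j', Integrable (fun ω => h j ω * h j' ω) ℙ := fun j j' =>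
    (integrable_const (((n:ℝ)+1) * ((n:ℝ)+1))).mono'
      ((hhmeas j).mul (hhmeas j')).aestronglyMeasurable
      (Filter.Eventually.of_forall fun ω => by
        rw [norm_mul]
        exact mul_le_mul (hhbd j ω) (hhbd j' ω) (norm_nonneg _) (by positivity))
  -- value of ∫ h j * h j'
  have hHval : ∀ j j', ∫ ω, h j ω * h j' ω ∂ℙ = (if j = j' then c else 0) - (s:ℝ)⁻¹ := by
    intro j j'
    have hNN_int : Integrable (fun ω => N j ω * N j' ω) ℙ :=
      (hNint j').bdd_mul (c := (s:ℝ)) (hNmeas j).aestronglyMeasurable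
        (Filter.Eventually.of_forall fun ω => by
          rw [Real.norm_eq_abs, abs_of_nonneg (hNnn j ω)]; exact hNle j ω)
    have hNNval : ∫ ω, N j ω * N j' ω ∂ℙ
        = (s:ℝ) * ((if j = j' then (n:ℝ)⁻¹ else 0) + ((s:ℝ) - 1) * ((n:ℝ)⁻¹ * (n:ℝ)⁻¹)) := by
      have hpt : (fun ω => N j ω * N j' ω)
          = fun ω => ∑ t, ∑ t', I t j ω * I t' j' ω := by
        funext ω; simp only [hN]; rw [Finset.sum_mul_sum]
      rw [hpt]
      rw [integral_finset_sum _ (fun t _ => integrable_finset_sum _ (fun t' _ => hII_int t t' j j'))]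
      have hswap : ∀ t : Fin s, (∫ ω, ∑ t', I t j ω * I t' j' ω ∂ℙ)
          = ∑ t', ∫ ω, I t j ω * I t' j' ω ∂ℙ :=
        fun t => integral_finset_sum _ (fun t' _ => hII_int t t' j j')
      simp only [hswap]
      have hval : ∀ t t' : Fin s, ∫ ω, I t j ω * I t' j' ω ∂ℙ
          = if t = t' then (if j = j' then (n:ℝ)⁻¹ else 0) else (n:ℝ)⁻¹ * (n:ℝ)⁻¹ := by
        intro t t'
        by_cases htt : t = t'
        · subst htt; rw [if_pos rfl]; exact hIIval_eq t j j'
        · rw [if_neg htt]; exact hIIval t t' j j' htt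
      simp only [hval]
      have hrow : ∀ t : Fin s,
          (∑ t' : Fin s, if t = t' then (if j = j' then (n:ℝ)⁻¹ else 0) else (n:ℝ)⁻¹ * (n:ℝ)⁻¹)
          = (if j = j' then (n:ℝ)⁻¹ else 0) + ((s:ℝ) - 1) * ((n:ℝ)⁻¹ * (n:ℝ)⁻¹) := by
        intro t
        have hsplit : ∀ t' : Fin s,
            (if t = t' then (if j = j' then (n:ℝ)⁻¹ else 0) else (n:ℝ)⁻¹ * (n:ℝ)⁻¹)
            = (n:ℝ)⁻¹ * (n:ℝ)⁻¹
              + (if t = t' then (if j = j' then (n:ℝ)⁻¹ else 0) - (n:ℝ)⁻¹ * (n:ℝ)⁻¹ else 0) := by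
          intro t'; split_ifs <;> ring
        simp only [hsplit, Finset.sum_add_distrib, Finset.sum_const, Finset.card_univ,
          Fintype.card_fin, nsmul_eq_mul, Finset.sum_ite_eq, Finset.mem_univ, if_true]
        ring
      simp only [hrow, Finset.sum_const, Finset.card_univ, Fintype.card_fin, nsmul_eq_mul]
    have hpt2 : (fun ω => h j ω * h j' ω)
        = fun ω => c^2 * (N j ω * N j' ω) - c * N j ω - c * N j' ω + 1 := by
      funext ω; simp only [hh]; ring
    have i1 : Integrable (fun ω => c^2 * (N j ω * N j' ω)) ℙ := hNN_int.const_mul _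
    have i2 : Integrable (fun ω => c * N j ω) ℙ := (hNint j).const_mul _
    have i3 : Integrable (fun ω => c * N j' ω) ℙ := (hNint j').const_mul _
    have i12 : Integrable (fun ω => c^2 * (N j ω * N j' ω) - c * N j ω) ℙ := i1.sub i2
    have i123 : Integrable (fun ω => c^2 * (N j ω * N j' ω) - c * N j ω - c * N j' ω) ℙ :=
      i12.sub i3
    rw [hpt2]
    rw [integral_add i123 (integrable_const 1)]
    rw [integral_sub i12 i3, integral_sub i1 i2]
    rw [integral_const_mul, integral_const_mul, integral_const_mul]
    rw [hNNval, hNval j, hNval j', integral_const]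
    simp only [probReal_univ, measure_univ, ENNReal.toReal_one, smul_eq_mul, one_mul]
    rw [hc]
    by_cases hjj : j = j' <;> simp only [hjj, if_true, if_false] <;> field_simp <;> ring
  -- pointwise decomposition
  have hD : ∀ ω, c * ∑ t, g (r ω t) ω - ∑ j, g j ω = ∑ j, h j ω * g j ω := by
    intro ω
    have hT : ∀ t, g (r ω t) ω = ∑ j, I t j ω * g j ω := by
      intro t
      simp only [hI, ite_mul, one_mul, zero_mul, Finset.sum_ite_eq, Finset.mem_univ, if_true]
    have h1 : ∑ t, g (r ω t) ω = ∑ j, N j ω * g j ω := by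
      rw [Finset.sum_congr rfl fun t _ => hT t, Finset.sum_comm]
      exact Finset.sum_congr rfl fun j _ => (Finset.sum_mul _ _ _).symm
    rw [h1, Finset.mul_sum, ← Finset.sum_sub_distrib]
    exact Finset.sum_congr rfl fun j _ => by simp only [hh]; ring
  have hDsq : ∀ ω, (c * ∑ t, g (r ω t) ω - ∑ j, g j ω)^2
      = ∑ j, ∑ j', (h j ω * h j' ω) * (g j ω * g j' ω) := by
    intro ω
    rw [hD ω, sq, Finset.sum_mul_sum]
    exact Finset.sum_congr rfl fun j _ => Finset.sum_congr rfl fun j' _ => by ring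
  have hterm_int : ∀ j j', Integrable (fun ω => (h j ω * h j' ω) * (g j ω * g j' ω)) ℙ := by
    intro j j'
    refine (hgg j j').bdd_mul (c := ((n:ℝ)+1) * ((n:ℝ)+1)) ((hhmeas j).mul (hhmeas j')).aestronglyMeasurable
      (Filter.Eventually.of_forall fun ω => ?_)
    rw [norm_mul]
    exact mul_le_mul (hhbd j ω) (hhbd j' ω) (norm_nonneg _) (by positivity)
  have hInt : Integrable (fun ω => (c * ∑ t, g (r ω t) ω - ∑ j, g j ω)^2) ℙ := by
    rw [show (fun ω => (c * ∑ t, g (r ω t) ω - ∑ j, g j ω)^2)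
        = fun ω => ∑ j, ∑ j', (h j ω * h j' ω) * (g j ω * g j' ω) from funext hDsq]
    exact integrable_finset_sum _ fun j _ => integrable_finset_sum _ fun j' _ => hterm_int j j'
  have hprod : ∀ j j', ∫ ω, (h j ω * h j' ω) * (g j ω * g j' ω) ∂ℙ
      = (∫ ω, h j ω * h j' ω ∂ℙ) * ∫ ω, g j ω * g j' ω ∂ℙ := by
    intro j j'
    have hφ : Measurable (fun v : Fin s → Fin n =>
        (c * (∑ t, if v t = j then (1:ℝ) else 0) - 1)
          * (c * (∑ t, if v t = j' then (1:ℝ) else 0) - 1)) := by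
      apply Measurable.mul <;>
      · apply Measurable.sub _ measurable_const
        apply Measurable.const_mul
        apply Finset.measurable_sum
        intro t _
        exact Measurable.ite ((measurable_pi_apply t) (measurableSet_singleton _))
          measurable_const measurable_const
    have hψ : Measurable (fun u : Fin n → ℝ => u j * u j') :=
      (measurable_pi_apply j).mul (measurable_pi_apply j')
    have hind : IndepFun (fun ω => h j ω * h j' ω) (fun ω => g j ω * g j' ω) ℙ :=
      (hgr.comp hψ hφ).symm
    exact hind.integral_fun_mul_eq_mul_integral (hhh_int j j').1 (hgg j j').1
  refine ⟨hInt, ?_⟩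
  rw [show (fun ω => (c * ∑ t, g (r ω t) ω - ∑ j, g j ω)^2)
      = fun ω => ∑ j, ∑ j', (h j ω * h j' ω) * (g j ω * g j' ω) from funext hDsq]
  rw [integral_finset_sum _ (fun j _ => integrable_finset_sum _ fun j' _ => hterm_int j j')]
  have hswap : ∀ j, (∫ ω, ∑ j', (h j ω * h j' ω) * (g j ω * g j' ω) ∂ℙ)
      = ∑ j', ∫ ω, (h j ω * h j' ω) * (g j ω * g j' ω) ∂ℙ :=
    fun j => integral_finset_sum _ fun j' _ => hterm_int j j'
  have hG2 : ∫ ω, (∑ j, g j ω)^2 ∂ℙ = ∑ j, ∑ j', ∫ ω, g j ω * g j' ω ∂ℙ := by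
    rw [show (fun ω => (∑ j, g j ω)^2) = fun ω => ∑ j, ∑ j', g j ω * g j' ω from
      funext fun ω => by rw [sq, Finset.sum_mul_sum]]
    rw [integral_finset_sum _ fun j _ => integrable_finset_sum _ fun j' _ => hgg j j']
    exact Finset.sum_congr rfl fun j _ => integral_finset_sum _ fun j' _ => hgg j j'
  have hEg : ∀ j : Fin n, (∫ ω, (g j ω)^2 ∂ℙ) = ∫ ω, g j ω * g j ω ∂ℙ := by
    intro j
    congr 1
    funext ω
    rw [sq]
  simp only [hswap, hprod, hHval, hEg, hG2]
  simp only [sub_mul, ite_mul, zero_mul, Finset.sum_sub_distrib, Finset.sum_ite_eq,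
    Finset.mem_univ, if_true, Finset.mul_sum]

set_option maxHeartbeats 1000000 in
/-- Variance (in the vectorized/Frobenius sense
`V_‖[X] = E[‖X − E[X]‖_F²] = ∑_{i,k} Var[X_{ik}]`) of the multilevel correction term
for matrix multiplication:
`V_‖[f⊙(Ẑ_l) − f⊙(Ẑ_{l−1})] ≤ 2 C_f² (M+1) (n ν̄ + μ̄) M^(−l)`, where `Ẑ_l` and
`Ẑ_{l−1}` are uniformly sketched products with `M^l` and `M^(l−1)` indices on the
same probability space (arbitrary coupling). -/
theorem lipschitz_sketch_level_variance_matrix_product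
    {Ω : Type*} [MeasureSpace Ω] [IsProbabilityMeasure (ℙ : Measure Ω)]
    (m n d : ℕ) (hn : 0 < n)
    (A : Ω → Fin m → Fin n → ℝ) (B : Ω → Fin n → Fin d → ℝ)
    (hA : ∀ i j, Measurable fun ω => A ω i j) (hB : ∀ j k, Measurable fun ω => B ω j k)
    (hAB_indep : iIndepFun
      (m := fun _ : (Fin m × Fin n) ⊕ (Fin n × Fin d) => (inferInstance : MeasurableSpace ℝ))
      (Sum.elim (fun p ω => A ω p.1 p.2) (fun p ω => B ω p.1 p.2)) ℙ)
    (wA wB : Fin n → ℝ)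
    (hwA : ∀ j, wA j = ∫ ω, ∑ i, (A ω i j) ^ 2 ∂ℙ)
    (hwB : ∀ j, wB j = ∫ ω, ∑ k, (B ω j k) ^ 2 ∂ℙ)
    (hwA_int : ∀ j, Integrable (fun ω => ∑ i, (A ω i j) ^ 2) ℙ)
    (hwB_int : ∀ j, Integrable (fun ω => ∑ k, (B ω j k) ^ 2) ℙ)
    (hwA_pos : ∀ j, 0 < wA j) (hwB_pos : ∀ j, 0 < wB j)
    (hABF_int : Integrable (fun ω => ∑ i, ∑ k, (∑ j, A ω i j * B ω j k) ^ 2) ℙ)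
    (f : ℝ → ℝ) (Cf : ℝ) (hf : ∀ x y, |f x - f y| ≤ Cf * |x - y|)
    (M l : ℕ) (hM : 2 ≤ M) (hl : 1 ≤ l)
    -- M^l i.i.d. uniform indices for level l, independent of (A, B)
    (r : Ω → Fin (M ^ l) → Fin n) (hr : ∀ t, Measurable fun ω => r ω t)
    (hr_iid : iIndepFun (m := fun _ : Fin (M ^ l) => (inferInstance : MeasurableSpace (Fin n)))
      (fun t ω => r ω t) ℙ)
    (hr_unif : ∀ t j, ℙ {ω | r ω t = j} = (n : ENNReal)⁻¹)
    (hr_AB : IndepFun (fun ω => (A ω, B ω)) r ℙ)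
    -- M^(l−1) i.i.d. uniform indices for level l−1, independent of (A, B),
    -- with arbitrary coupling to the level-l indices
    (r' : Ω → Fin (M ^ (l - 1)) → Fin n) (hr' : ∀ t, Measurable fun ω => r' ω t)
    (hr'_iid : iIndepFun (m := fun _ : Fin (M ^ (l - 1)) => (inferInstance : MeasurableSpace (Fin n)))
      (fun t ω => r' ω t) ℙ)
    (hr'_unif : ∀ t j, ℙ {ω | r' ω t = j} = (n : ENNReal)⁻¹)
    (hr'_AB : IndepFun (fun ω => (A ω, B ω)) r' ℙ)
    (μbar νbar : ℝ)
    (hμbar : μbar = (∑ j, Real.sqrt (wA j * wB j)) ^ 2 -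
      ∫ ω, ∑ i, ∑ k, (∑ j, A ω i j * B ω j k) ^ 2 ∂ℙ)
    (hνbar : νbar = ∑ i, (Real.sqrt (wA i * wB i) -
      (1 / (n : ℝ)) * ∑ j, Real.sqrt (wA j * wB j)) ^ 2) :
    ∑ i, ∑ k, variance (fun ω =>
        f ((n : ℝ) / (M ^ l : ℝ) * ∑ t, A ω i (r ω t) * B ω (r ω t) k) -
        f ((n : ℝ) / (M ^ (l - 1) : ℝ) * ∑ t, A ω i (r' ω t) * B ω (r' ω t) k)) ℙ ≤
      2 * Cf ^ 2 * ((M : ℝ) + 1) * ((n : ℝ) * νbar + μbar) * ((M : ℝ) ^ l)⁻¹ := by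
  have hn0 : (n:ℝ) ≠ 0 := Nat.cast_ne_zero.mpr hn.ne'
  have hM0 : 0 < M := by omega
  have hMR0 : (M:ℝ) ≠ 0 := Nat.cast_ne_zero.mpr hM0.ne'
  -- basic integrability of entries
  have hA2_int : ∀ i j, Integrable (fun ω => (A ω i j)^2) ℙ := by
    intro i j
    refine (hwA_int j).mono ((hA i j).pow_const 2).aestronglyMeasurable
      (Filter.Eventually.of_forall fun ω => ?_)
    rw [Real.norm_eq_abs, Real.norm_eq_abs, abs_of_nonneg (sq_nonneg _),
      abs_of_nonneg (Finset.sum_nonneg fun i' _ => sq_nonneg _)]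
    exact Finset.single_le_sum (f := fun i' => (A ω i' j)^2) (fun i' _ => sq_nonneg _)
      (Finset.mem_univ i)
  have hB2_int : ∀ j k, Integrable (fun ω => (B ω j k)^2) ℙ := by
    intro j k
    refine (hwB_int j).mono ((hB j k).pow_const 2).aestronglyMeasurable
      (Filter.Eventually.of_forall fun ω => ?_)
    rw [Real.norm_eq_abs, Real.norm_eq_abs, abs_of_nonneg (sq_nonneg _),
      abs_of_nonneg (Finset.sum_nonneg fun k' _ => sq_nonneg _)]
    exact Finset.single_le_sum (f := fun k' => (B ω j k')^2) (fun k' _ => sq_nonneg _)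
      (Finset.mem_univ k)
  have hABind : ∀ (i : Fin m) (j j' : Fin n) (k : Fin d),
      IndepFun (fun ω => A ω i j) (fun ω => B ω j' k) ℙ := by
    intro i j j' k
    exact hAB_indep.indepFun
      (show (Sum.inl (i,j) : (Fin m × Fin n) ⊕ (Fin n × Fin d)) ≠ Sum.inr (j',k) by simp)
  have hsq_meas : Measurable fun x : ℝ => x^2 := measurable_id.pow_const 2
  have hgsq_int : ∀ (i : Fin m) (j : Fin n) (k : Fin d),
      Integrable (fun ω => (A ω i j * B ω j k)^2) ℙ := by
    intro i j k
    have h1 : IndepFun (fun ω => (A ω i j)^2) (fun ω => (B ω j k)^2) ℙ :=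
      (hABind i j j k).comp hsq_meas hsq_meas
    have h2 := h1.integrable_mul (hA2_int i j) (hB2_int j k)
    have h3 : (fun ω => (A ω i j * B ω j k)^2) = fun ω => (A ω i j)^2 * (B ω j k)^2 := by
      funext ω; ring
    rw [h3]; exact h2
  have hgg_int : ∀ (i : Fin m) (k : Fin d) (j j' : Fin n),
      Integrable (fun ω => (A ω i j * B ω j k) * (A ω i j' * B ω j' k)) ℙ := by
    intro i k j j'
    refine ((hgsq_int i j k).add (hgsq_int i j' k)).mono'
      ((((hA i j).mul (hB j k)).mul ((hA i j').mul (hB j' k)))).aestronglyMeasurable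
      (Filter.Eventually.of_forall fun ω => ?_)
    show ‖A ω i j * B ω j k * (A ω i j' * B ω j' k)‖
      ≤ (A ω i j * B ω j k)^2 + (A ω i j' * B ω j' k)^2
    rw [Real.norm_eq_abs, abs_mul]
    nlinarith [sq_nonneg (|A ω i j * B ω j k| - |A ω i j' * B ω j' k|),
      sq_abs (A ω i j * B ω j k), sq_abs (A ω i j' * B ω j' k),
      abs_nonneg (A ω i j * B ω j k), abs_nonneg (A ω i j' * B ω j' k)]
  have hAB2 : ∀ (i : Fin m) (j : Fin n) (k : Fin d),
      ∫ ω, (A ω i j * B ω j k)^2 ∂ℙ = (∫ ω, (A ω i j)^2 ∂ℙ) * ∫ ω, (B ω j k)^2 ∂ℙ := by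
    intro i j k
    have h1 : IndepFun (fun ω => (A ω i j)^2) (fun ω => (B ω j k)^2) ℙ :=
      (hABind i j j k).comp hsq_meas hsq_meas
    have h3 : (fun ω => (A ω i j * B ω j k)^2) = fun ω => (A ω i j)^2 * (B ω j k)^2 := by
      funext ω; ring
    rw [h3]
    exact h1.integral_fun_mul_eq_mul_integral (hA2_int i j).1 (hB2_int j k).1
  have hwAj : ∀ j, ∑ i, ∫ ω, (A ω i j)^2 ∂ℙ = wA j := by
    intro j
    rw [hwA j, integral_finset_sum _ fun i _ => hA2_int i j]
  have hwBj : ∀ j, ∑ k, ∫ ω, (B ω j k)^2 ∂ℙ = wB j := by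
    intro j
    rw [hwB j, integral_finset_sum _ fun k _ => hB2_int j k]
  have hGint : ∀ (i : Fin m) (k : Fin d),
      Integrable (fun ω => (∑ j, A ω i j * B ω j k)^2) ℙ := by
    intro i k
    have h3 : (fun ω => (∑ j, A ω i j * B ω j k)^2)
        = fun ω => ∑ j, ∑ j', (A ω i j * B ω j k) * (A ω i j' * B ω j' k) := by
      funext ω; rw [sq, Finset.sum_mul_sum]
    rw [h3]
    exact integrable_finset_sum _ fun j _ => integrable_finset_sum _ fun j' _ => hgg_int i k j j'
  have hFsplit : ∫ ω, ∑ i, ∑ k, (∑ j, A ω i j * B ω j k)^2 ∂ℙ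
      = ∑ i, ∑ k, ∫ ω, (∑ j, A ω i j * B ω j k)^2 ∂ℙ := by
    rw [integral_finset_sum _ fun i _ => integrable_finset_sum _ fun k _ => hGint i k]
    exact Finset.sum_congr rfl fun i _ => integral_finset_sum _ fun k _ => hGint i k
  -- the MSE identity at an arbitrary level
  have key : ∀ (s : ℕ) (hs0 : 0 < s) (rr : Ω → Fin s → Fin n)
      (hrr : ∀ t, Measurable fun ω => rr ω t)
      (hrr_iid : iIndepFun (m := fun _ : Fin s => (inferInstance : MeasurableSpace (Fin n)))
        (fun t ω => rr ω t) ℙ)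
      (hrr_unif : ∀ t j, ℙ {ω | rr ω t = j} = (n : ENNReal)⁻¹)
      (hrr_AB : IndepFun (fun ω => (A ω, B ω)) rr ℙ),
      (∀ (i : Fin m) (k : Fin d), Integrable (fun ω =>
        ((n:ℝ)/(s:ℝ) * ∑ t, A ω i (rr ω t) * B ω (rr ω t) k - ∑ j, A ω i j * B ω j k)^2) ℙ) ∧
      ∑ i, ∑ k, ∫ ω, ((n:ℝ)/(s:ℝ) * ∑ t, A ω i (rr ω t) * B ω (rr ω t) k
          - ∑ j, A ω i j * B ω j k)^2 ∂ℙ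
        = ((s:ℝ))⁻¹ * ((n:ℝ) * ∑ j, wA j * wB j
            - ∫ ω, ∑ i, ∑ k, (∑ j, A ω i j * B ω j k)^2 ∂ℙ) := by
    intro s hs0 rr hrr hrr_iid hrr_unif hrr_AB
    have hs0' : (s:ℝ) ≠ 0 := Nat.cast_ne_zero.mpr hs0.ne'
    have entry : ∀ (i : Fin m) (k : Fin d), _ := fun (i : Fin m) (k : Fin d) =>
      sketch_entry_mse n hn s hs0
        (fun j ω => A ω i j * B ω j k) (fun j => (hA i j).mul (hB j k)) (hgg_int i k)
        rr hrr hrr_iid hrr_unif (by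
          have hψ : Measurable (fun p : (Fin m → Fin n → ℝ) × (Fin n → Fin d → ℝ) =>
              (fun j => p.1 i j * p.2 j k)) :=
            measurable_pi_lambda _ fun j => by fun_prop
          exact hrr_AB.comp hψ measurable_id)
    refine ⟨fun i k => (entry i k).1, ?_⟩
    rw [Finset.sum_congr rfl fun i _ => Finset.sum_congr rfl fun k _ => (entry i k).2]
    simp only [hAB2]
    rw [hFsplit]
    simp only [Finset.sum_sub_distrib]
    have e1 : ∑ i : Fin m, ∑ k : Fin d,
        ((n:ℝ)/(s:ℝ) * ∑ j, (∫ ω, (A ω i j)^2 ∂ℙ) * ∫ ω, (B ω j k)^2 ∂ℙ)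
        = (n:ℝ)/(s:ℝ) * ∑ j, wA j * wB j := by
      calc ∑ i : Fin m, ∑ k : Fin d,
          ((n:ℝ)/(s:ℝ) * ∑ j, (∫ ω, (A ω i j)^2 ∂ℙ) * ∫ ω, (B ω j k)^2 ∂ℙ)
          = (n:ℝ)/(s:ℝ) * ∑ i : Fin m, ∑ k : Fin d, ∑ j,
              (∫ ω, (A ω i j)^2 ∂ℙ) * ∫ ω, (B ω j k)^2 ∂ℙ := by
            simp only [Finset.mul_sum]
        _ = (n:ℝ)/(s:ℝ) * ∑ i : Fin m, ∑ j, ∑ k : Fin d,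
              (∫ ω, (A ω i j)^2 ∂ℙ) * ∫ ω, (B ω j k)^2 ∂ℙ := by
            congr 1
            exact Finset.sum_congr rfl fun i _ => Finset.sum_comm
        _ = (n:ℝ)/(s:ℝ) * ∑ j, ∑ i : Fin m, ∑ k : Fin d,
              (∫ ω, (A ω i j)^2 ∂ℙ) * ∫ ω, (B ω j k)^2 ∂ℙ := by
            congr 1
            exact Finset.sum_comm
        _ = (n:ℝ)/(s:ℝ) * ∑ j, wA j * wB j := by
            congr 1
            refine Finset.sum_congr rfl fun j _ => ?_
            rw [← Finset.sum_mul_sum, hwAj j, hwBj j]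
    have e2 : ∑ i : Fin m, ∑ k : Fin d,
        ((s:ℝ))⁻¹ * ∫ ω, (∑ j, A ω i j * B ω j k)^2 ∂ℙ
        = ((s:ℝ))⁻¹ * ∑ i : Fin m, ∑ k : Fin d, ∫ ω, (∑ j, A ω i j * B ω j k)^2 ∂ℙ := by
      simp only [Finset.mul_sum]
    rw [e1, e2]
    field_simp
  have keyl := key (M ^ l) (Nat.pow_pos hM0) r hr hr_iid hr_unif hr_AB
  have keyl' := key (M ^ (l-1)) (Nat.pow_pos hM0) r' hr' hr'_iid hr'_unif hr'_AB
  simp only [Nat.cast_pow] at keyl keyl'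
  obtain ⟨keyl_int, keyl_eq⟩ := keyl
  obtain ⟨keyl'_int, keyl'_eq⟩ := keyl'
  -- Lipschitz constant facts
  have hCf0 : 0 ≤ Cf := by
    have h1 := hf 0 1
    norm_num at h1
    linarith [abs_nonneg (f 0 - f 1)]
  have hf_cont : Continuous f := by
    have : LipschitzWith ⟨Cf, hCf0⟩ f := LipschitzWith.of_dist_le_mul fun x y => by
      rw [Real.dist_eq, Real.dist_eq]; exact hf x y
    exact this.continuous
  -- measurability of the sketched entries
  have hZmeas : ∀ (s : ℕ) (rr : Ω → Fin s → Fin n) (_ : ∀ t, Measurable fun ω => rr ω t)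
      (i : Fin m) (k : Fin d) (c : ℝ),
      Measurable (fun ω => c * ∑ t, A ω i (rr ω t) * B ω (rr ω t) k) := by
    intro s rr hrr i k c
    apply Measurable.const_mul
    apply Finset.measurable_sum
    intro t _
    have h3 : (fun ω => A ω i (rr ω t) * B ω (rr ω t) k)
        = fun ω => ∑ j, if rr ω t = j then A ω i j * B ω j k else 0 := by
      funext ω
      symm
      simp
    rw [h3]
    exact Finset.measurable_sum _ fun j _ =>
      Measurable.ite ((hrr t) (measurableSet_singleton j)) ((hA i j).mul (hB j k))
        measurable_const
  -- per-entry variance bound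
  have hvar : ∀ (i : Fin m) (k : Fin d),
      variance (fun ω =>
        f ((n : ℝ) / (M ^ l : ℝ) * ∑ t, A ω i (r ω t) * B ω (r ω t) k) -
        f ((n : ℝ) / (M ^ (l - 1) : ℝ) * ∑ t, A ω i (r' ω t) * B ω (r' ω t) k)) ℙ
      ≤ 2 * Cf^2 *
        ((∫ ω, ((n:ℝ)/(M:ℝ)^l * ∑ t, A ω i (r ω t) * B ω (r ω t) k
            - ∑ j, A ω i j * B ω j k)^2 ∂ℙ)
         + ∫ ω, ((n:ℝ)/(M:ℝ)^(l-1) * ∑ t, A ω i (r' ω t) * B ω (r' ω t) k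
            - ∑ j, A ω i j * B ω j k)^2 ∂ℙ) := by
    intro i k
    set Zl : Ω → ℝ := fun ω => (n:ℝ)/(M:ℝ)^l * ∑ t, A ω i (r ω t) * B ω (r ω t) k with hZl
    set Zl' : Ω → ℝ := fun ω => (n:ℝ)/(M:ℝ)^(l-1) * ∑ t, A ω i (r' ω t) * B ω (r' ω t) k with hZl'
    set Zc : Ω → ℝ := fun ω => ∑ j, A ω i j * B ω j k with hZc
    have hXm : AEStronglyMeasurable (fun ω => f (Zl ω) - f (Zl' ω)) ℙ :=
      ((hf_cont.measurable.comp (hZmeas _ r hr i k _)).sub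
        (hf_cont.measurable.comp (hZmeas _ r' hr' i k _))).aestronglyMeasurable
    refine le_trans (variance_le_expectation_sq hXm) ?_
    have hrhs_int : Integrable (fun ω =>
        2 * Cf^2 * ((Zl ω - Zc ω)^2 + (Zl' ω - Zc ω)^2)) ℙ :=
      ((keyl_int i k).add (keyl'_int i k)).const_mul _
    have hpt : ∀ ω, ((fun ω => f (Zl ω) - f (Zl' ω))^2) ω
        ≤ 2 * Cf^2 * ((Zl ω - Zc ω)^2 + (Zl' ω - Zc ω)^2) := by
      intro ω
      show (f (Zl ω) - f (Zl' ω))^2 ≤ _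
      have h1 := hf (Zl ω) (Zl' ω)
      have h2 : (f (Zl ω) - f (Zl' ω))^2 ≤ Cf^2 * (Zl ω - Zl' ω)^2 := by
        nlinarith [abs_nonneg (f (Zl ω) - f (Zl' ω)), abs_nonneg (Zl ω - Zl' ω),
          sq_abs (f (Zl ω) - f (Zl' ω)), sq_abs (Zl ω - Zl' ω),
          mul_nonneg hCf0 (abs_nonneg (Zl ω - Zl' ω))]
      have h3 : (Zl ω - Zl' ω)^2 ≤ 2 * ((Zl ω - Zc ω)^2 + (Zl' ω - Zc ω)^2) := by
        nlinarith [sq_nonneg (Zl ω + Zl' ω - 2 * Zc ω)]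
      nlinarith [sq_nonneg Cf, mul_le_mul_of_nonneg_left h3 (sq_nonneg Cf)]
    refine le_trans (integral_mono_of_nonneg
      (Filter.Eventually.of_forall fun ω => sq_nonneg _) hrhs_int
      (Filter.Eventually.of_forall hpt)) ?_
    rw [integral_const_mul, integral_add (keyl_int i k) (keyl'_int i k)]
  -- sum everything up
  have hsum := Finset.sum_le_sum (s := (Finset.univ : Finset (Fin m)))
    (fun i _ => Finset.sum_le_sum (s := (Finset.univ : Finset (Fin d)))
      (fun k _ => hvar i k))
  refine le_trans hsum ?_
  have hcollect : ∑ i : Fin m, ∑ k : Fin d, (2 * Cf^2 *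
        ((∫ ω, ((n:ℝ)/(M:ℝ)^l * ∑ t, A ω i (r ω t) * B ω (r ω t) k
            - ∑ j, A ω i j * B ω j k)^2 ∂ℙ)
         + ∫ ω, ((n:ℝ)/(M:ℝ)^(l-1) * ∑ t, A ω i (r' ω t) * B ω (r' ω t) k
            - ∑ j, A ω i j * B ω j k)^2 ∂ℙ))
      = 2 * Cf^2 *
        ((∑ i, ∑ k, ∫ ω, ((n:ℝ)/(M:ℝ)^l * ∑ t, A ω i (r ω t) * B ω (r ω t) k
            - ∑ j, A ω i j * B ω j k)^2 ∂ℙ)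
         + ∑ i, ∑ k, ∫ ω, ((n:ℝ)/(M:ℝ)^(l-1) * ∑ t, A ω i (r' ω t) * B ω (r' ω t) k
            - ∑ j, A ω i j * B ω j k)^2 ∂ℙ) := by
    simp only [Finset.mul_sum, Finset.sum_add_distrib, mul_add]
  rw [hcollect, keyl_eq, keyl'_eq]
  -- identify the constant
  have hw_nonneg : ∀ j, 0 ≤ wA j * wB j := fun j => mul_nonneg (hwA_pos j).le (hwB_pos j).le
  have hq : ∀ j, Real.sqrt (wA j * wB j)^2 = wA j * wB j := fun j => Real.sq_sqrt (hw_nonneg j)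
  have hT : (n:ℝ) * νbar + μbar = (n:ℝ) * ∑ j, wA j * wB j
      - ∫ ω, ∑ i, ∑ k, (∑ j, A ω i j * B ω j k)^2 ∂ℙ := by
    rw [hνbar, hμbar]
    have hexp : ∑ i, (Real.sqrt (wA i * wB i) - (1/(n:ℝ)) * ∑ j, Real.sqrt (wA j * wB j))^2
        = ∑ j, (wA j * wB j) - (1/(n:ℝ)) * (∑ j, Real.sqrt (wA j * wB j))^2 := by
      have hterm : ∀ i : Fin n,
          (Real.sqrt (wA i * wB i) - (1/(n:ℝ)) * ∑ j, Real.sqrt (wA j * wB j))^2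
          = wA i * wB i
            - (2/(n:ℝ)) * (∑ j, Real.sqrt (wA j * wB j)) * Real.sqrt (wA i * wB i)
            + (1/(n:ℝ))^2 * (∑ j, Real.sqrt (wA j * wB j))^2 := by
        intro i
        have h := hq i
        linear_combination h
      rw [Finset.sum_congr rfl fun i _ => hterm i]
      rw [Finset.sum_add_distrib, Finset.sum_sub_distrib, Finset.sum_const,
        Finset.card_univ, Fintype.card_fin, nsmul_eq_mul]
      rw [show ∑ i, (2/(n:ℝ)) * (∑ j, Real.sqrt (wA j * wB j)) * Real.sqrt (wA i * wB i)
          = (2/(n:ℝ)) * (∑ j, Real.sqrt (wA j * wB j)) * (∑ j, Real.sqrt (wA j * wB j)) from by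
        rw [← Finset.mul_sum]]
      field_simp
      ring
    rw [hexp]
    field_simp
    ring
  rw [hT]
  apply le_of_eq
  have hpow : ((M:ℝ))^l = (M:ℝ)^(l-1) * (M:ℝ) := by
    rw [← pow_succ, Nat.sub_add_cancel hl]
  have hMl0 : ((M:ℝ))^(l-1) ≠ 0 := pow_ne_zero _ hMR0
  rw [hpow]
  field_simp
  ring
end

section
/- Let A be a random m×n real matrix and B a random n×d real matrix with mutually independent entries, finite nonzero moments E[‖A_{:,j}‖_2^2], E[‖B_{j,:}‖_2^2], and E[‖AB‖_F^2] < ∞; let f : ℝ → ℝ be Lipschitz with constant C_f, applied entrywise as f⊙, with f⊙(AB) square-integrable. Let Ẑ_0 be the sketched product of A and B using a single uniformly sampled index, i.e. Ẑ_0 = n·A_{:,r} B_{r,:} with r uniform on {1,...,n} independent of (A,B). Then V_‖[ f⊙(Ẑ_0) ] ≤ 2 C_f^2 (n·ν̄ + μ̄) + 2 V_‖[ f⊙(AB) ], where, with w̄_j = E[‖A_{:,j}‖_2^2]·E[‖B_{j,:}‖_2^2], μ̄ = (Σ_{j=1}^n √(w̄_j))^2 − E[‖AB‖_F^2] and ν̄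 = Σ_{i=1}^n ( √(w̄_i) − (1/n) Σ_{j=1}^n √(w̄_j) )^2. -/
set_option linter.unusedSectionVars false
set_option maxHeartbeats 1000000

open MeasureTheory ProbabilityTheory

section Aux
variable {Ω : Type*} [MeasureSpace Ω] [IsProbabilityMeasure (ℙ : Measure Ω)]

lemma aux_int_sub_sq {X : Ω → ℝ} (hX : MemLp X 2 ℙ) (c : ℝ) :
    ∫ ω, (X ω - c) ^ 2 ∂ℙ = (∫ ω, X ω ^ 2 ∂ℙ) - 2 * c * (∫ ω, X ω ∂ℙ) + c ^ 2 := by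
  have h2 : Integrable (fun ω => X ω ^ 2) ℙ :=
    (memLp_two_iff_integrable_sq hX.aestronglyMeasurable).1 hX
  have h1 : Integrable X ℙ := hX.integrable one_le_two
  have h : ∀ ω, (X ω - c) ^ 2 = (X ω ^ 2 - (2 * c) * X ω) + c ^ 2 := fun ω => by ring
  simp_rw [h]
  rw [integral_add (show Integrable (fun ω => X ω ^ 2 - 2 * c * X ω) ℙ from
      h2.sub (h1.const_mul (2*c))) (integrable_const _),
    integral_sub h2 (h1.const_mul (2*c)), integral_const_mul, integral_const]
  simp

lemma aux_var_sq {X : Ω → ℝ} (hX : MemLp X 2 ℙ) :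
    variance X ℙ = (∫ ω, X ω ^ 2 ∂ℙ) - (∫ ω, X ω ∂ℙ) ^ 2 := by
  rw [variance_eq_sub hX]; simp [sq]

lemma aux_var_le {X : Ω → ℝ} (hX : MemLp X 2 ℙ) (c : ℝ) :
    variance X ℙ ≤ ∫ ω, (X ω - c) ^ 2 ∂ℙ := by
  rw [aux_var_sq hX, aux_int_sub_sq hX c]
  nlinarith [sq_nonneg ((∫ ω, X ω ∂ℙ) - c)]

lemma aux_var_eq {X : Ω → ℝ} (hX : MemLp X 2 ℙ) :
    variance X ℙ = ∫ ω, (X ω - ∫ ω', X ω' ∂ℙ) ^ 2 ∂ℙ := by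
  rw [aux_var_sq hX, aux_int_sub_sq hX]; ring

lemma aux_int_mul_L2 {X Y : Ω → ℝ} (hX : MemLp X 2 ℙ) (hY : MemLp Y 2 ℙ) :
    Integrable (fun ω => X ω * Y ω) ℙ := by
  have h2 : Integrable (fun ω => X ω ^ 2) ℙ :=
    (memLp_two_iff_integrable_sq hX.aestronglyMeasurable).1 hX
  have h2' : Integrable (fun ω => Y ω ^ 2) ℙ :=
    (memLp_two_iff_integrable_sq hY.aestronglyMeasurable).1 hY
  refine Integrable.mono' (h2.add h2') (hX.aestronglyMeasurable.mul hY.aestronglyMeasurable) ?_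
  filter_upwards with ω
  rw [Real.norm_eq_abs, abs_mul]
  simp only [Pi.add_apply]
  nlinarith [abs_nonneg (X ω), abs_nonneg (Y ω), sq_abs (X ω), sq_abs (Y ω)]

lemma aux_lip_sq {f : ℝ → ℝ} {Cf : ℝ} (hf : ∀ x y, |f x - f y| ≤ Cf * |x - y|) (a b : ℝ) :
    (f a - f b) ^ 2 ≤ Cf ^ 2 * (a - b) ^ 2 := by
  calc (f a - f b) ^ 2 = |f a - f b| ^ 2 := (sq_abs _).symm
    _ ≤ (Cf * |a - b|) ^ 2 := by
        apply pow_le_pow_left₀ (abs_nonneg _) (hf a b)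
    _ = Cf ^ 2 * (a - b) ^ 2 := by rw [mul_pow, sq_abs]

lemma aux_lip_memL2 {f : ℝ → ℝ} {Cf : ℝ} (hf : ∀ x y, |f x - f y| ≤ Cf * |x - y|)
    {X : Ω → ℝ} (hX : MemLp X 2 ℙ) : MemLp (fun ω => f (X ω)) 2 ℙ := by
  have hCf0 : 0 ≤ Cf := by
    have h := hf 1 0
    have h0 := abs_nonneg (f 1 - f 0)
    simp at h; linarith
  have hcont : Continuous f := by
    have : LipschitzWith (Real.toNNReal Cf) f := by
      rw [lipschitzWith_iff_dist_le_mul]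
      intro x y
      rw [Real.dist_eq, Real.dist_eq]
      calc |f x - f y| ≤ Cf * |x - y| := hf x y
        _ ≤ Real.toNNReal Cf * |x - y| := by
            apply mul_le_mul_of_nonneg_right _ (abs_nonneg _)
            exact Real.le_coe_toNNReal Cf
    exact this.continuous
  have hmeas : AEStronglyMeasurable (fun ω => f (X ω)) ℙ :=
    hcont.comp_aestronglyMeasurable hX.aestronglyMeasurable
  have h1 : MemLp (fun ω => f (X ω) - f 0) 2 ℙ := by
    refine MemLp.of_le (hX.const_mul Cf) (hmeas.sub aestronglyMeasurable_const) ?_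
    filter_upwards with ω
    rw [Real.norm_eq_abs, Real.norm_eq_abs, abs_mul]
    calc |f (X ω) - f 0| ≤ Cf * |X ω - 0| := hf (X ω) 0
      _ = |Cf| * |X ω| := by rw [sub_zero, abs_of_nonneg hCf0]
  have h2 := h1.add (memLp_const (f 0))
  have heq : ((fun ω => f (X ω) - f 0) + fun _ => f 0) = fun ω => f (X ω) := by
    ext ω; simp
  rw [← heq]; exact h2

end Aux

/-- Variance (in the vectorized/Frobenius sense
`V_‖[X] = E[‖X − E[X]‖_F²] = ∑_{i,k} Var[X_{ik}]`) at the coarsest level for the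
matrix product: for the single-index uniform sketch `Ẑ₀ = n A_{:,r} B_{r,:}`,
`V_‖[f⊙(Ẑ₀)] ≤ 2 C_f² (n ν̄ + μ̄) + 2 V_‖[f⊙(AB)]`. -/
theorem lipschitz_sketch_level_zero_variance_matrix_product
    {Ω : Type*} [MeasureSpace Ω] [IsProbabilityMeasure (ℙ : Measure Ω)]
    (m n d : ℕ) (hn : 0 < n)
    (A : Ω → Fin m → Fin n → ℝ) (B : Ω → Fin n → Fin d → ℝ)
    (hA : ∀ i j, Measurable fun ω => A ω i j) (hB : ∀ j k, Measurable fun ω => B ω j k)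
    (hAB_indep : iIndepFun (β := fun _ : (Fin m × Fin n) ⊕ (Fin n × Fin d) => ℝ)
      (Sum.elim (fun (p : Fin m × Fin n) ω => A ω p.1 p.2) (fun (p : Fin n × Fin d) ω => B ω p.1 p.2)) ℙ)
    (wA wB : Fin n → ℝ)
    (hwA : ∀ j, wA j = ∫ ω, ∑ i, (A ω i j) ^ 2 ∂ℙ)
    (hwB : ∀ j, wB j = ∫ ω, ∑ k, (B ω j k) ^ 2 ∂ℙ)
    (hwA_int : ∀ j, Integrable (fun ω => ∑ i, (A ω i j) ^ 2) ℙ)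
    (hwB_int : ∀ j, Integrable (fun ω => ∑ k, (B ω j k) ^ 2) ℙ)
    (hwA_pos : ∀ j, 0 < wA j) (hwB_pos : ∀ j, 0 < wB j)
    (hABF_int : Integrable (fun ω => ∑ i, ∑ k, (∑ j, A ω i j * B ω j k) ^ 2) ℙ)
    (f : ℝ → ℝ) (Cf : ℝ) (hf : ∀ x y, |f x - f y| ≤ Cf * |x - y|)
    -- f⊙(AB) is square-integrable
    (hfL2 : ∀ i k, MemLp (fun ω => f (∑ j, A ω i j * B ω j k)) 2 ℙ)
    -- a single index, uniform on {1,…,n}, independent of (A, B)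
    (r : Ω → Fin n) (hr : Measurable r)
    (hr_unif : ∀ j, ℙ {ω | r ω = j} = (n : ENNReal)⁻¹)
    (hr_AB : IndepFun (fun ω => (A ω, B ω)) r ℙ)
    (μbar νbar : ℝ)
    (hμbar : μbar = (∑ j, Real.sqrt (wA j * wB j)) ^ 2 -
      ∫ ω, ∑ i, ∑ k, (∑ j, A ω i j * B ω j k) ^ 2 ∂ℙ)
    (hνbar : νbar = ∑ i, (Real.sqrt (wA i * wB i) -
      (1 / (n : ℝ)) * ∑ j, Real.sqrt (wA j * wB j)) ^ 2) :
    ∑ i, ∑ k, variance (fun ω => f ((n : ℝ) * (A ω i (r ω) * B ω (r ω) k))) ℙ ≤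
      2 * Cf ^ 2 * ((n : ℝ) * νbar + μbar) +
        2 * ∑ i, ∑ k, variance (fun ω => f (∑ j, A ω i j * B ω j k)) ℙ := by
  classical
  have hn' : (n : ℝ) ≠ 0 := Nat.cast_ne_zero.mpr hn.ne'
  -- entrywise integrability of squares
  have hA2 : ∀ i j, Integrable (fun ω => (A ω i j) ^ 2) ℙ := by
    intro i j
    refine (hwA_int j).mono' ((hA i j).pow_const 2).aestronglyMeasurable ?_
    filter_upwards with ω
    rw [Real.norm_eq_abs, abs_of_nonneg (sq_nonneg _)]
    exact Finset.single_le_sum (fun i' _ => sq_nonneg (A ω i' j)) (Finset.mem_univ i)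
  have hB2 : ∀ j k, Integrable (fun ω => (B ω j k) ^ 2) ℙ := by
    intro j k
    refine (hwB_int j).mono' ((hB j k).pow_const 2).aestronglyMeasurable ?_
    filter_upwards with ω
    rw [Real.norm_eq_abs, abs_of_nonneg (sq_nonneg _)]
    exact Finset.single_le_sum (fun k' _ => sq_nonneg (B ω j k')) (Finset.mem_univ k)
  -- independence of entries of A and B
  have hABind : ∀ i j k, IndepFun (fun ω => A ω i j) (fun ω => B ω j k) ℙ := by
    intro i j k
    exact hAB_indep.indepFun
      (show (Sum.inl (i,j) : (Fin m × Fin n) ⊕ (Fin n × Fin d)) ≠ Sum.inr (j,k) by simp)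
  have hA2B2_ind : ∀ i j k, IndepFun (fun ω => (A ω i j) ^ 2) (fun ω => (B ω j k) ^ 2) ℙ :=
    fun i j k => (hABind i j k).comp (measurable_id.pow_const 2) (measurable_id.pow_const 2)
  have hA2B2_int : ∀ i j k, Integrable (fun ω => (A ω i j) ^ 2 * (B ω j k) ^ 2) ℙ :=
    fun i j k => (hA2B2_ind i j k).integrable_mul (hA2 i j) (hB2 j k)
  have hA2B2_eq : ∀ i j k, ∫ ω, (A ω i j) ^ 2 * (B ω j k) ^ 2 ∂ℙ =
      (∫ ω, (A ω i j) ^ 2 ∂ℙ) * ∫ ω, (B ω j k) ^ 2 ∂ℙ :=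
    fun i j k => (hA2B2_ind i j k).integral_fun_mul_eq_mul_integral (hA2 i j).aestronglyMeasurable (hB2 j k).aestronglyMeasurable
  -- L² facts
  have hAB_L2 : ∀ i j k, MemLp (fun ω => A ω i j * B ω j k) 2 ℙ := by
    intro i j k
    refine (memLp_two_iff_integrable_sq (((hA i j).mul (hB j k)).aestronglyMeasurable)).2 ?_
    simpa [mul_pow] using hA2B2_int i j k
  have hZ_L2 : ∀ i k, MemLp (fun ω => ∑ j, A ω i j * B ω j k) 2 ℙ :=
    fun i k => by exact memLp_finset_sum (μ := ℙ) Finset.univ fun j _ => hAB_L2 i j k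
  have hZ2_int : ∀ i k, Integrable (fun ω => (∑ j, A ω i j * B ω j k) ^ 2) ℙ :=
    fun i k => (memLp_two_iff_integrable_sq (hZ_L2 i k).aestronglyMeasurable).1 (hZ_L2 i k)
  -- the indicator variables of the sampled index
  have hrset : ∀ j, MeasurableSet {ω | r ω = j} := fun j => hr (measurableSet_singleton j)
  have hχ_int : ∀ j : Fin n, Integrable (fun ω => if r ω = j then (1:ℝ) else 0) ℙ := by
    intro j
    have h := (integrable_const (μ := (ℙ : Measure Ω)) (1:ℝ)).indicator (hrset j)
    refine h.congr ?_
    filter_upwards with ω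
    by_cases hω : r ω = j <;> simp [Set.indicator_apply, hω]
  have hχ_avg : ∀ j : Fin n, ∫ ω, (if r ω = j then (1:ℝ) else 0) ∂ℙ = (n : ℝ)⁻¹ := by
    intro j
    have h : (fun ω => if r ω = j then (1:ℝ) else 0)
        = Set.indicator {ω | r ω = j} (fun _ => (1:ℝ)) := by
      ext ω; by_cases hω : r ω = j <;> simp [Set.indicator_apply, hω]
    rw [h, integral_indicator_const (1:ℝ) (hrset j), measureReal_def, hr_unif j]
    simp [ENNReal.toReal_inv]
  -- the key sampling identity
  have key : ∀ (j : Fin n) (g : Ω → ℝ),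
      (∃ φ : ((Fin m → Fin n → ℝ) × (Fin n → Fin d → ℝ)) → ℝ,
        Measurable φ ∧ g = fun ω => φ (A ω, B ω)) → Integrable g ℙ →
      Integrable (fun ω => (if r ω = j then (1:ℝ) else 0) * g ω) ℙ ∧
      ∫ ω, (if r ω = j then (1:ℝ) else 0) * g ω ∂ℙ = (n : ℝ)⁻¹ * ∫ ω, g ω ∂ℙ := by
    rintro j g ⟨φ, hφ, rfl⟩ hint
    have hψ : Measurable (fun j' : Fin n => if j' = j then (1:ℝ) else 0) :=
      measurable_of_countable _
    have hind : IndepFun (fun ω => (if r ω = j then (1:ℝ) else 0)) (fun ω => φ (A ω, B ω)) ℙ :=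
      (hr_AB.comp hφ hψ).symm
    constructor
    · exact hind.integrable_mul (hχ_int j) hint
    · have h := hind.integral_fun_mul_eq_mul_integral (hχ_int j).aestronglyMeasurable hint.aestronglyMeasurable
      rw [hχ_avg j] at h
      exact h
  -- measurability of coordinate maps on the product space
  have hφAB : ∀ (i : Fin m) (j : Fin n) (k : Fin d),
      Measurable (fun p : (Fin m → Fin n → ℝ) × (Fin n → Fin d → ℝ) => p.1 i j * p.2 j k) := by
    intro i j k
    fun_prop
  -- picking out a term of a sum via the sampled index
  have hsum_pick : ∀ (ω : Ω) (v : Fin n → ℝ),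
      ∑ j, (if r ω = j then (1:ℝ) else 0) * v j = v (r ω) := by
    intro ω v
    simp_rw [boole_mul]
    rw [Finset.sum_ite_eq]
    simp
  -- integrability of squared sketch entries
  have hZh2_int : ∀ (i : Fin m) (j : Fin n) (k : Fin d),
      Integrable (fun ω => ((n:ℝ) * (A ω i j * B ω j k)) ^ 2) ℙ := by
    intro i j k
    refine ((hA2B2_int i j k).const_mul ((n:ℝ)^2)).congr ?_
    filter_upwards with ω
    ring
  have hZh2_integral : ∀ (i : Fin m) (j : Fin n) (k : Fin d),
      ∫ ω, ((n:ℝ) * (A ω i j * B ω j k)) ^ 2 ∂ℙ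
        = (n:ℝ)^2 * ((∫ ω, (A ω i j)^2 ∂ℙ) * ∫ ω, (B ω j k)^2 ∂ℙ) := by
    intro i j k
    have e : ∀ ω, ((n:ℝ) * (A ω i j * B ω j k)) ^ 2 = (n:ℝ)^2 * ((A ω i j)^2 * (B ω j k)^2) :=
      fun ω => by ring
    simp_rw [e]
    rw [integral_const_mul, hA2B2_eq i j k]
  -- pointwise expansions of the sketch entry
  have hZh_eq : ∀ (i : Fin m) (k : Fin d) (ω : Ω),
      (n:ℝ) * (A ω i (r ω) * B ω (r ω) k)
        = ∑ j, (if r ω = j then (1:ℝ) else 0) * ((n:ℝ) * (A ω i j * B ω j k)) :=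
    fun i k ω => (hsum_pick ω fun j => (n:ℝ) * (A ω i j * B ω j k)).symm
  have hZh_sq : ∀ (i : Fin m) (k : Fin d) (ω : Ω),
      ((n:ℝ) * (A ω i (r ω) * B ω (r ω) k)) ^ 2
        = ∑ j, (if r ω = j then (1:ℝ) else 0) * ((n:ℝ) * (A ω i j * B ω j k)) ^ 2 :=
    fun i k ω => (hsum_pick ω fun j => ((n:ℝ) * (A ω i j * B ω j k)) ^ 2).symm
  have hZhZ : ∀ (i : Fin m) (k : Fin d) (ω : Ω),
      ((n:ℝ) * (A ω i (r ω) * B ω (r ω) k)) * (∑ j, A ω i j * B ω j k)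
        = ∑ j, (if r ω = j then (1:ℝ) else 0) *
            (((n:ℝ) * (A ω i j * B ω j k)) * ∑ j', A ω i j' * B ω j' k) :=
    fun i k ω => (hsum_pick ω fun j =>
      ((n:ℝ) * (A ω i j * B ω j k)) * ∑ j', A ω i j' * B ω j' k).symm
  -- key facts per fixed j
  have keysq : ∀ (i : Fin m) (j : Fin n) (k : Fin d),
      Integrable (fun ω => (if r ω = j then (1:ℝ) else 0) * ((n:ℝ) * (A ω i j * B ω j k)) ^ 2) ℙ ∧
      ∫ ω, (if r ω = j then (1:ℝ) else 0) * ((n:ℝ) * (A ω i j * B ω j k)) ^ 2 ∂ℙ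
        = (n:ℝ)⁻¹ * ∫ ω, ((n:ℝ) * (A ω i j * B ω j k)) ^ 2 ∂ℙ := by
    intro i j k
    exact key j _ ⟨fun p => ((n:ℝ) * (p.1 i j * p.2 j k)) ^ 2,
      ((hφAB i j k).const_mul _).pow_const 2, rfl⟩ (hZh2_int i j k)
  have hABZ_int : ∀ (i : Fin m) (j : Fin n) (k : Fin d),
      Integrable (fun ω => ((n:ℝ) * (A ω i j * B ω j k)) * ∑ j', A ω i j' * B ω j' k) ℙ :=
    fun i j k => aux_int_mul_L2 ((hAB_L2 i j k).const_mul (n:ℝ)) (hZ_L2 i k)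
  have keyZ : ∀ (i : Fin m) (j : Fin n) (k : Fin d),
      Integrable (fun ω => (if r ω = j then (1:ℝ) else 0) *
        (((n:ℝ) * (A ω i j * B ω j k)) * ∑ j', A ω i j' * B ω j' k)) ℙ ∧
      ∫ ω, (if r ω = j then (1:ℝ) else 0) *
        (((n:ℝ) * (A ω i j * B ω j k)) * ∑ j', A ω i j' * B ω j' k) ∂ℙ
        = (n:ℝ)⁻¹ * ∫ ω, ((n:ℝ) * (A ω i j * B ω j k)) * ∑ j', A ω i j' * B ω j' k ∂ℙ := by
    intro i j k
    refine key j _ ⟨fun p => ((n:ℝ) * (p.1 i j * p.2 j k)) * ∑ j', p.1 i j' * p.2 j' k,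
      ((hφAB i j k).const_mul _).mul (Finset.measurable_sum _ fun j' _ => hφAB i j' k), rfl⟩
      (hABZ_int i j k)
  -- integrability and integral of the squared sketch entry
  have hZhsq_int : ∀ (i : Fin m) (k : Fin d),
      Integrable (fun ω => ((n:ℝ) * (A ω i (r ω) * B ω (r ω) k)) ^ 2) ℙ := by
    intro i k
    have h : (fun ω => ((n:ℝ) * (A ω i (r ω) * B ω (r ω) k)) ^ 2)
        = fun ω => ∑ j, (if r ω = j then (1:ℝ) else 0) * ((n:ℝ) * (A ω i j * B ω j k)) ^ 2 :=
      funext fun ω => hZh_sq i k ω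
    rw [h]
    exact integrable_finset_sum _ fun j _ => (keysq i j k).1
  have hZhsq_integral : ∀ (i : Fin m) (k : Fin d),
      ∫ ω, ((n:ℝ) * (A ω i (r ω) * B ω (r ω) k)) ^ 2 ∂ℙ
        = (n:ℝ) * ∑ j, (∫ ω, (A ω i j)^2 ∂ℙ) * ∫ ω, (B ω j k)^2 ∂ℙ := by
    intro i k
    have h : (fun ω => ((n:ℝ) * (A ω i (r ω) * B ω (r ω) k)) ^ 2)
        = fun ω => ∑ j, (if r ω = j then (1:ℝ) else 0) * ((n:ℝ) * (A ω i j * B ω j k)) ^ 2 :=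
      funext fun ω => hZh_sq i k ω
    rw [h, integral_finset_sum _ fun j _ => (keysq i j k).1]
    rw [Finset.mul_sum]
    refine Finset.sum_congr rfl fun j _ => ?_
    rw [(keysq i j k).2, hZh2_integral i j k]
    field_simp
  -- the sketch entry is in L²
  have hZh_meas : ∀ (i : Fin m) (k : Fin d),
      Measurable (fun ω => (n:ℝ) * (A ω i (r ω) * B ω (r ω) k)) := by
    intro i k
    have h : (fun ω => (n:ℝ) * (A ω i (r ω) * B ω (r ω) k))
        = fun ω => ∑ j, (if r ω = j then (1:ℝ) else 0) * ((n:ℝ) * (A ω i j * B ω j k)) :=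
      funext fun ω => hZh_eq i k ω
    rw [h]
    refine Finset.measurable_sum _ fun j _ => Measurable.mul ?_ (((hA i j).mul (hB j k)).const_mul _)
    exact Measurable.ite (hrset j) measurable_const measurable_const
  have hZh_L2 : ∀ (i : Fin m) (k : Fin d),
      MemLp (fun ω => (n:ℝ) * (A ω i (r ω) * B ω (r ω) k)) 2 ℙ := by
    intro i k
    exact (memLp_two_iff_integrable_sq (hZh_meas i k).aestronglyMeasurable).2 (hZhsq_int i k)
  -- integral of sketch entry times true entry
  have hZhZ_int : ∀ (i : Fin m) (k : Fin d),
      Integrable (fun ω => ((n:ℝ) * (A ω i (r ω) * B ω (r ω) k)) * ∑ j, A ω i j * B ω j k) ℙ :=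
    fun i k => aux_int_mul_L2 (hZh_L2 i k) (hZ_L2 i k)
  have hZhZ_integral : ∀ (i : Fin m) (k : Fin d),
      ∫ ω, ((n:ℝ) * (A ω i (r ω) * B ω (r ω) k)) * ∑ j, A ω i j * B ω j k ∂ℙ
        = ∫ ω, (∑ j, A ω i j * B ω j k) ^ 2 ∂ℙ := by
    intro i k
    have h : (fun ω => ((n:ℝ) * (A ω i (r ω) * B ω (r ω) k)) * ∑ j, A ω i j * B ω j k)
        = fun ω => ∑ j, (if r ω = j then (1:ℝ) else 0) *
            (((n:ℝ) * (A ω i j * B ω j k)) * ∑ j', A ω i j' * B ω j' k) :=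
      funext fun ω => hZhZ i k ω
    rw [h, integral_finset_sum _ fun j _ => (keyZ i j k).1]
    have step : ∀ j : Fin n, ∫ ω, (if r ω = j then (1:ℝ) else 0) *
        (((n:ℝ) * (A ω i j * B ω j k)) * ∑ j', A ω i j' * B ω j' k) ∂ℙ
        = ∫ ω, (A ω i j * B ω j k) * ∑ j', A ω i j' * B ω j' k ∂ℙ := by
      intro j
      rw [(keyZ i j k).2]
      have e : ∀ ω, ((n:ℝ) * (A ω i j * B ω j k)) * ∑ j', A ω i j' * B ω j' k
          = (n:ℝ) * ((A ω i j * B ω j k) * ∑ j', A ω i j' * B ω j' k) := fun ω => by ring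
      simp_rw [e]
      rw [integral_const_mul, ← mul_assoc, inv_mul_cancel₀ hn', one_mul]
    rw [Finset.sum_congr rfl fun j _ => step j]
    rw [← integral_finset_sum _ fun j _ => aux_int_mul_L2 (hAB_L2 i j k) (hZ_L2 i k)]
    refine integral_congr_ae (Filter.Eventually.of_forall fun ω => ?_)
    show ∑ j, A ω i j * B ω j k * (∑ j', A ω i j' * B ω j' k)
        = (∑ j, A ω i j * B ω j k) ^ 2
    rw [← Finset.sum_mul, sq]
  -- the entrywise variance bound
  have ent : ∀ (i : Fin m) (k : Fin d),
      variance (fun ω => f ((n:ℝ) * (A ω i (r ω) * B ω (r ω) k))) ℙ ≤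
        2 * Cf^2 * (∫ ω, ((n:ℝ) * (A ω i (r ω) * B ω (r ω) k)
            - ∑ j, A ω i j * B ω j k) ^ 2 ∂ℙ)
          + 2 * variance (fun ω => f (∑ j, A ω i j * B ω j k)) ℙ := by
    intro i k
    set c := ∫ ω, f (∑ j, A ω i j * B ω j k) ∂ℙ with hc
    have hZh := hZh_L2 i k
    have hZ := hZ_L2 i k
    have hfZh : MemLp (fun ω => f ((n:ℝ) * (A ω i (r ω) * B ω (r ω) k))) 2 ℙ :=
      aux_lip_memL2 hf hZh
    have hfZ := hfL2 i k
    have hdiff : MemLp (fun ω => (n:ℝ) * (A ω i (r ω) * B ω (r ω) k)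
        - ∑ j, A ω i j * B ω j k) 2 ℙ := hZh.sub hZ
    have hdiff2 : Integrable (fun ω => ((n:ℝ) * (A ω i (r ω) * B ω (r ω) k)
        - ∑ j, A ω i j * B ω j k) ^ 2) ℙ :=
      (memLp_two_iff_integrable_sq hdiff.aestronglyMeasurable).1 hdiff
    have hfZc : MemLp (fun ω => f (∑ j, A ω i j * B ω j k) - c) 2 ℙ := hfZ.sub (memLp_const c)
    have hfZc2 : Integrable (fun ω => (f (∑ j, A ω i j * B ω j k) - c) ^ 2) ℙ :=
      (memLp_two_iff_integrable_sq hfZc.aestronglyMeasurable).1 hfZc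
    have hfZhc : MemLp (fun ω => f ((n:ℝ) * (A ω i (r ω) * B ω (r ω) k)) - c) 2 ℙ :=
      hfZh.sub (memLp_const c)
    have hfZhc2 : Integrable (fun ω => (f ((n:ℝ) * (A ω i (r ω) * B ω (r ω) k)) - c) ^ 2) ℙ :=
      (memLp_two_iff_integrable_sq hfZhc.aestronglyMeasurable).1 hfZhc
    have h1 := aux_var_le hfZh c
    have h2 : ∫ ω, (f ((n:ℝ) * (A ω i (r ω) * B ω (r ω) k)) - c) ^ 2 ∂ℙ ≤
        ∫ ω, (2 * Cf^2 * (((n:ℝ) * (A ω i (r ω) * B ω (r ω) k)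
            - ∑ j, A ω i j * B ω j k) ^ 2)
          + 2 * ((f (∑ j, A ω i j * B ω j k) - c) ^ 2)) ∂ℙ := by
      refine integral_mono hfZhc2 ((hdiff2.const_mul _).add (hfZc2.const_mul _)) ?_
      intro ω
      dsimp only
      have e1 := aux_lip_sq hf ((n:ℝ) * (A ω i (r ω) * B ω (r ω) k)) (∑ j, A ω i j * B ω j k)
      nlinarith [sq_nonneg ((f ((n:ℝ) * (A ω i (r ω) * B ω (r ω) k))
        - f (∑ j, A ω i j * B ω j k)) - (f (∑ j, A ω i j * B ω j k) - c))]
    have h3 : ∫ ω, (2 * Cf^2 * (((n:ℝ) * (A ω i (r ω) * B ω (r ω) k)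
            - ∑ j, A ω i j * B ω j k) ^ 2)
          + 2 * ((f (∑ j, A ω i j * B ω j k) - c) ^ 2)) ∂ℙ
        = 2 * Cf^2 * (∫ ω, ((n:ℝ) * (A ω i (r ω) * B ω (r ω) k)
            - ∑ j, A ω i j * B ω j k) ^ 2 ∂ℙ)
          + 2 * ∫ ω, (f (∑ j, A ω i j * B ω j k) - c) ^ 2 ∂ℙ := by
      rw [integral_add (hdiff2.const_mul _) (hfZc2.const_mul _), integral_const_mul,
        integral_const_mul]
    have h4 : ∫ ω, (f (∑ j, A ω i j * B ω j k) - c) ^ 2 ∂ℙ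
        = variance (fun ω => f (∑ j, A ω i j * B ω j k)) ℙ := (aux_var_eq hfZ).symm
    have hd0 : (0:ℝ) ≤ ∫ ω, ((n:ℝ) * (A ω i (r ω) * B ω (r ω) k)
        - ∑ j, A ω i j * B ω j k) ^ 2 ∂ℙ :=
      integral_nonneg fun ω => sq_nonneg _
    linarith
  -- the expected squared error of each entry
  have hTent : ∀ (i : Fin m) (k : Fin d),
      ∫ ω, ((n:ℝ) * (A ω i (r ω) * B ω (r ω) k) - ∑ j, A ω i j * B ω j k) ^ 2 ∂ℙ
        = (n:ℝ) * (∑ j, (∫ ω, (A ω i j)^2 ∂ℙ) * ∫ ω, (B ω j k)^2 ∂ℙ)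
          - ∫ ω, (∑ j, A ω i j * B ω j k) ^ 2 ∂ℙ := by
    intro i k
    have e : (fun ω => ((n:ℝ) * (A ω i (r ω) * B ω (r ω) k) - ∑ j, A ω i j * B ω j k) ^ 2)
        = fun ω => (((n:ℝ) * (A ω i (r ω) * B ω (r ω) k)) ^ 2
            - 2 * (((n:ℝ) * (A ω i (r ω) * B ω (r ω) k)) * ∑ j, A ω i j * B ω j k))
          + (∑ j, A ω i j * B ω j k) ^ 2 := funext fun ω => by ring
    rw [e, integral_add (show Integrable (fun ω => ((n:ℝ) * (A ω i (r ω) * B ω (r ω) k)) ^ 2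
        - 2 * (((n:ℝ) * (A ω i (r ω) * B ω (r ω) k)) * ∑ j, A ω i j * B ω j k)) ℙ from
        (hZhsq_int i k).sub ((hZhZ_int i k).const_mul 2)) (hZ2_int i k),
      integral_sub (hZhsq_int i k) ((hZhZ_int i k).const_mul 2), integral_const_mul,
      hZhZ_integral i k, hZhsq_integral i k]
    ring
  -- sum of expected squared errors
  have hsumA : ∀ j, ∑ i, ∫ ω, (A ω i j)^2 ∂ℙ = wA j := by
    intro j
    rw [hwA j, integral_finset_sum _ fun i _ => hA2 i j]
  have hsumB : ∀ j, ∑ k, ∫ ω, (B ω j k)^2 ∂ℙ = wB j := by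
    intro j
    rw [hwB j, integral_finset_sum _ fun k _ => hB2 j k]
  have hT : ∑ i, ∑ k, ∫ ω, ((n:ℝ) * (A ω i (r ω) * B ω (r ω) k)
        - ∑ j, A ω i j * B ω j k) ^ 2 ∂ℙ
      = (n:ℝ) * (∑ j, wA j * wB j)
        - ∫ ω, ∑ i, ∑ k, (∑ j, A ω i j * B ω j k) ^ 2 ∂ℙ := by
    rw [Finset.sum_congr rfl fun i _ => Finset.sum_congr rfl fun k _ => hTent i k]
    have hsplit : ∑ i, ∑ k, ((n:ℝ) * (∑ j, (∫ ω, (A ω i j)^2 ∂ℙ) * ∫ ω, (B ω j k)^2 ∂ℙ)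
          - ∫ ω, (∑ j, A ω i j * B ω j k) ^ 2 ∂ℙ)
        = (∑ i, ∑ k, (n:ℝ) * (∑ j, (∫ ω, (A ω i j)^2 ∂ℙ) * ∫ ω, (B ω j k)^2 ∂ℙ))
          - ∑ i, ∑ k, ∫ ω, (∑ j, A ω i j * B ω j k) ^ 2 ∂ℙ := by
      rw [← Finset.sum_sub_distrib]
      exact Finset.sum_congr rfl fun i _ => Finset.sum_sub_distrib _ _
    rw [hsplit]
    congr 1
    · -- first part
      have base : ∀ (c : Fin m → Fin n → Fin d → ℝ),
          ∑ i, ∑ k, ∑ j, c i j k = ∑ j, ∑ i, ∑ k, c i j k := by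
        intro c
        calc ∑ i, ∑ k, ∑ j, c i j k
            = ∑ i, ∑ j, ∑ k, c i j k :=
              Finset.sum_congr rfl fun i _ => Finset.sum_comm
          _ = ∑ j, ∑ i, ∑ k, c i j k := Finset.sum_comm
      have swap : ∑ i, ∑ k, (n:ℝ) * (∑ j, (∫ ω, (A ω i j)^2 ∂ℙ) * ∫ ω, (B ω j k)^2 ∂ℙ)
          = (n:ℝ) * ∑ j, (∑ i, ∫ ω, (A ω i j)^2 ∂ℙ) * (∑ k, ∫ ω, (B ω j k)^2 ∂ℙ) := by
        calc ∑ i, ∑ k, (n:ℝ) * (∑ j, (∫ ω, (A ω i j)^2 ∂ℙ) * ∫ ω, (B ω j k)^2 ∂ℙ)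
            = ∑ i, ∑ k, ∑ j, (n:ℝ) * ((∫ ω, (A ω i j)^2 ∂ℙ) * ∫ ω, (B ω j k)^2 ∂ℙ) := by
              simp_rw [Finset.mul_sum]
          _ = ∑ j, ∑ i, ∑ k, (n:ℝ) * ((∫ ω, (A ω i j)^2 ∂ℙ) * ∫ ω, (B ω j k)^2 ∂ℙ) := base _
          _ = (n:ℝ) * ∑ j, (∑ i, ∫ ω, (A ω i j)^2 ∂ℙ) * (∑ k, ∫ ω, (B ω j k)^2 ∂ℙ) := by
              rw [Finset.mul_sum]
              refine Finset.sum_congr rfl fun j _ => ?_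
              rw [Finset.sum_mul_sum, Finset.mul_sum]
              exact Finset.sum_congr rfl fun i _ => (Finset.mul_sum _ _ _).symm
      rw [swap]
      congr 1
      exact Finset.sum_congr rfl fun j _ => by rw [hsumA j, hsumB j]
    · -- second part
      rw [integral_finset_sum _ fun i _ => integrable_finset_sum _ fun k _ => hZ2_int i k]
      exact Finset.sum_congr rfl fun i _ =>
        (integral_finset_sum _ fun k _ => hZ2_int i k).symm
  -- algebraic identity for n ν̄ + μ̄
  have halg : (n:ℝ) * νbar + μbar
      = (n:ℝ) * (∑ j, wA j * wB j)
        - ∫ ω, ∑ i, ∑ k, (∑ j, A ω i j * B ω j k) ^ 2 ∂ℙ := by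
    have hs : ∀ j, Real.sqrt (wA j * wB j) ^ 2 = wA j * wB j :=
      fun j => Real.sq_sqrt (mul_pos (hwA_pos j) (hwB_pos j)).le
    rw [hνbar, hμbar]
    have expand : ∑ i, (Real.sqrt (wA i * wB i)
          - (1 / (n:ℝ)) * ∑ j, Real.sqrt (wA j * wB j)) ^ 2
        = (∑ j, wA j * wB j)
          - (2 * (1 / (n:ℝ)) * ∑ j, Real.sqrt (wA j * wB j))
              * (∑ j, Real.sqrt (wA j * wB j))
          + (n:ℝ) * ((1 / (n:ℝ)) * ∑ j, Real.sqrt (wA j * wB j)) ^ 2 := by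
      have e : ∀ i : Fin n, (Real.sqrt (wA i * wB i)
            - (1 / (n:ℝ)) * ∑ j, Real.sqrt (wA j * wB j)) ^ 2
          = (wA i * wB i)
            - (2 * (1 / (n:ℝ)) * ∑ j, Real.sqrt (wA j * wB j)) * Real.sqrt (wA i * wB i)
            + ((1 / (n:ℝ)) * ∑ j, Real.sqrt (wA j * wB j)) ^ 2 := by
        intro i
        linear_combination hs i
      rw [Finset.sum_congr rfl fun i _ => e i, Finset.sum_add_distrib,
        Finset.sum_sub_distrib, ← Finset.mul_sum, Finset.sum_const, Finset.card_univ,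
        Fintype.card_fin, nsmul_eq_mul]
    rw [expand]
    field_simp
    ring
  -- final assembly
  calc ∑ i, ∑ k, variance (fun ω => f ((n:ℝ) * (A ω i (r ω) * B ω (r ω) k))) ℙ
      ≤ ∑ i, ∑ k, (2 * Cf^2 * (∫ ω, ((n:ℝ) * (A ω i (r ω) * B ω (r ω) k)
            - ∑ j, A ω i j * B ω j k) ^ 2 ∂ℙ)
          + 2 * variance (fun ω => f (∑ j, A ω i j * B ω j k)) ℙ) :=
        Finset.sum_le_sum fun i _ => Finset.sum_le_sum fun k _ => ent i k
    _ = 2 * Cf^2 * (∑ i, ∑ k, ∫ ω, ((n:ℝ) * (A ω i (r ω) * B ω (r ω) k)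
            - ∑ j, A ω i j * B ω j k) ^ 2 ∂ℙ)
          + 2 * ∑ i, ∑ k, variance (fun ω => f (∑ j, A ω i j * B ω j k)) ℙ := by
        simp_rw [Finset.sum_add_distrib, Finset.mul_sum]
    _ = 2 * Cf ^ 2 * ((n : ℝ) * νbar + μbar) +
        2 * ∑ i, ∑ k, variance (fun ω => f (∑ j, A ω i j * B ω j k)) ℙ := by
        rw [hT, halg]
end
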